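/- arXiv:1411.3481 — 13 statements merged into one kernel-verified Lean document; each statement's English description precedes it below -/
import Mathlib

section
/- Let A be a set and f : A → A a self-map. There exists a lattice structure (A, ⊔, ⊓) on A such that f is a lattice anti-endomorphism of (A, ⊔, ⊓) if and only if f has a cycle of length 2, or f has no proper cycles and has at most one fixed point. -/
/-- `f` has a cycle of length `n`: `n` distinct elements `x₀,…,x_{n-1}` with
`f(xᵢ) = x_{i+1}` (indices mod `n`). -/
def HasCycle {A : Type*} (f : A → A) (n : ℕ) : Prop :=
  ∃ x : Fin n → A, Function.Injective x ∧
    ∀ i : Fin n, f (x i) = x ⟨((i : ℕ) + 1) % n, Nat.mod_lt _ i.pos⟩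

/-- `f` is a lattice anti-endomorphism. -/
def IsLatAntiEndo {A : Type*} [Lattice A] (f : A → A) : Prop :=
  ∀ x y : A, f (x ⊔ y) = f x ⊓ f y ∧ f (x ⊓ y) = f x ⊔ f y

/-!
If `f` is an anti-endomorphism and `s` is a finite `f`-invariant set with at least two points,
then `f` swaps `⨆ s` and `⨅ s`, which are distinct; a proper cycle, or two fixed points, form
such a set `s`.

Conversely, call `x` and `y` merging when `f^[n] x = f^[n] y` for some `n`. Label the points
injectively in a linear order, and inside a merge class compare `x` and `y` through their labels
at the last time `k` with `f^[k] x ≠ f^[k] y`, reversing the comparison when `k` is odd: `f`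
reverses this order. It remains to order the classes so that `f` reverses that order too, and to
order the points by class first.
* If `f` swaps `a` and `b`: the class of `a` at the bottom, the class of `b` at the top, all other
  classes pairwise incomparable in between. Labelling `b` least and `a` greatest makes `b` the
  least point of its class and `a` the greatest point of its class, so that `b` and `a` are the
  join and the meet of any two incomparable points.
* If every periodic point is fixed and there is at most one fixed point, the eventually fixed
  points form one class, and the classes of any other grand orbit are indexed by a level in `ℤ`
  that `f` raises by one. The classes at even level ordered by (orbit, level), then the eventually
  fixed class, then the classes at odd level in the reverse order, form a chain.
-/

open Function

section Cycles

variable {A : Type*} {f : A → A}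

theorem hasCycle_two_iff : HasCycle f 2 ↔ ∃ a b, a ≠ b ∧ f a = b ∧ f b = a := by
  constructor
  · rintro ⟨x, hx, hfx⟩
    exact ⟨x 0, x 1, hx.ne (by decide), hfx 0, hfx 1⟩
  · rintro ⟨a, b, hab, ha, hb⟩
    refine ⟨![a, b], ?_, ?_⟩
    · intro i j
      fin_cases i <;> fin_cases j <;> simp [hab, hab.symm]
    · intro i
      fin_cases i <;> simp [ha, hb]

theorem hasCycle_minimalPeriod (f : A → A) (x : A) : HasCycle f (minimalPeriod f x) := by
  refine ⟨fun i => f^[i] x, fun i j h => Fin.ext (iterate_injOn_Iio_minimalPeriod i.2 j.2 h),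
    fun i => ?_⟩
  simp only [iterate_mod_minimalPeriod_eq, ← iterate_succ_apply' f]

theorem isFixedPt_of_isPeriodicPt (hf : ∀ n, 2 ≤ n → ¬ HasCycle f n) (x : A) (n : ℕ)
    (hn : 0 < n) (hx : IsPeriodicPt f n x) : IsFixedPt f x := by
  have hmem := mk_mem_periodicPts hn hx
  have hpos := minimalPeriod_pos_of_mem_periodicPts hmem
  rw [← minimalPeriod_eq_one_iff_isFixedPt]
  by_contra hne
  exact hf _ (by omega) (hasCycle_minimalPeriod f x)

end Cycles

section AntiEndo

variable {A : Type*} [Lattice A] {f : A → A}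

theorem IsLatAntiEndo.map_finset_sup' (hf : IsLatAntiEndo f) {β : Type*} {s : Finset β}
    (hs : s.Nonempty) (g : β → A) : f (s.sup' hs g) = s.inf' hs (f ∘ g) := by
  induction hs using Finset.Nonempty.cons_induction with
  | singleton i => simp
  | cons i s _ hs ih => rw [Finset.sup'_cons hs, Finset.inf'_cons hs, (hf _ _).1, ih]; rfl

theorem IsLatAntiEndo.map_finset_inf' (hf : IsLatAntiEndo f) {β : Type*} {s : Finset β}
    (hs : s.Nonempty) (g : β → A) : f (s.inf' hs g) = s.sup' hs (f ∘ g) := by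
  induction hs using Finset.Nonempty.cons_induction with
  | singleton i => simp
  | cons i s _ hs ih => rw [Finset.sup'_cons hs, Finset.inf'_cons hs, (hf _ _).2, ih]; rfl

theorem IsLatAntiEndo.hasCycle_two [DecidableEq A] (hf : IsLatAntiEndo f) {s : Finset A}
    (hfs : s.image f = s) (hs : 1 < s.card) : HasCycle f 2 := by
  obtain ⟨x, hx, y, hy, hxy⟩ := Finset.one_lt_card.1 hs
  have hne : s.Nonempty := ⟨x, hx⟩
  refine hasCycle_two_iff.2 ⟨s.sup' hne id, s.inf' hne id, fun h => hxy ?_, ?_, ?_⟩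
  · exact le_antisymm ((Finset.le_sup' id hx).trans (h ▸ Finset.inf'_le id hy))
      ((Finset.le_sup' id hy).trans (h ▸ Finset.inf'_le id hx))
  · rw [hf.map_finset_sup']
    exact (Finset.inf'_comp_eq_image hne id).trans (Finset.inf'_congr _ hfs fun _ _ => rfl)
  · rw [hf.map_finset_inf']
    exact (Finset.sup'_comp_eq_image hne id).trans (Finset.sup'_congr _ hfs fun _ _ => rfl)

theorem IsLatAntiEndo.hasCycle_two_of_hasCycle (hf : IsLatAntiEndo f) {n : ℕ} (hn : 2 ≤ n)
    (h : HasCycle f n) : HasCycle f 2 := by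
  classical
  obtain ⟨x, hx, hfx⟩ := h
  have hrot : f ∘ x = x ∘ finRotate n := funext fun i => by
    have := i.neZero
    rw [comp_apply, hfx i, comp_apply, finRotate_apply]
    congr 1
    ext
    simp [Fin.val_add]
  refine hf.hasCycle_two (s := Finset.univ.image x) ?_ ?_
  · rw [Finset.image_image, hrot, ← Finset.image_image, Finset.image_univ_equiv]
  · rw [Finset.card_image_of_injective _ hx, Finset.card_univ, Fintype.card_fin]
    omega

theorem IsLatAntiEndo.eq_of_isFixedPt (hf : IsLatAntiEndo f) (h2 : ¬ HasCycle f 2) {u v : A}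
    (hu : f u = u) (hv : f v = v) : u = v := by
  classical
  by_contra huv
  exact h2 (hf.hasCycle_two (s := {u, v}) (by simp [hu, hv]) (by simp [huv]))

end AntiEndo

section Merge

variable {A : Type*} {f : A → A}

def Merges (f : A → A) (x y : A) : Prop := ∃ n, f^[n] x = f^[n] y

theorem iterate_eq_of_le {x y : A} {m n : ℕ} (h : f^[m] x = f^[m] y) (hmn : m ≤ n) :
    f^[n] x = f^[n] y := by
  obtain ⟨k, rfl⟩ := Nat.exists_eq_add_of_le hmn
  rw [add_comm, iterate_add_apply, iterate_add_apply, h]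

theorem Merges.refl (x : A) : Merges f x x := ⟨0, rfl⟩

theorem Merges.symm {x y : A} (h : Merges f x y) : Merges f y x :=
  h.imp fun _ => Eq.symm

theorem Merges.trans {x y z : A} (h₁ : Merges f x y) (h₂ : Merges f y z) : Merges f x z := by
  obtain ⟨m, hm⟩ := h₁
  obtain ⟨n, hn⟩ := h₂
  exact ⟨max m n, (iterate_eq_of_le hm (le_max_left m n)).trans
    (iterate_eq_of_le hn (le_max_right m n))⟩

theorem merges_map_iff {x y : A} : Merges f (f x) (f y) ↔ Merges f x y := by
  refine ⟨fun ⟨n, h⟩ => ⟨n + 1, by rwa [iterate_succ_apply, iterate_succ_apply]⟩,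
    fun ⟨n, h⟩ => ⟨n, ?_⟩⟩
  rw [← iterate_succ_apply, ← iterate_succ_apply]
  exact iterate_eq_of_le h n.le_succ

def IsLastDiff (f : A → A) (x y : A) (k : ℕ) : Prop :=
  f^[k] x ≠ f^[k] y ∧ f^[k + 1] x = f^[k + 1] y

theorem IsLastDiff.iterate_eq_iff {x y : A} {k j : ℕ} (h : IsLastDiff f x y k) :
    f^[j] x = f^[j] y ↔ k < j :=
  ⟨fun hj => lt_of_not_ge fun hjk => h.1 (iterate_eq_of_le hj hjk), iterate_eq_of_le h.2⟩

theorem exists_isLastDiff {x y : A} {n : ℕ} (h : f^[n] x = f^[n] y) (hne : x ≠ y) :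
    ∃ k, IsLastDiff f x y k := by
  induction n with
  | zero => exact absurd h hne
  | succ n ih =>
    by_cases hn : f^[n] x = f^[n] y
    · exact ih hn
    · exact ⟨n, hn, h⟩

end Merge

section MergeOrder

variable {A L : Type*} [LinearOrder L] (ι : A → L) (f : A → A)

def TwistLT (k : ℕ) (u v : A) : Prop := if Even k then ι u < ι v else ι v < ι u

def MergeLT (x y : A) : Prop := ∃ k, IsLastDiff f x y k ∧ TwistLT ι k (f^[k] x) (f^[k] y)

variable {ι f}

theorem TwistLT.ne {k : ℕ} {u v : A} (h : TwistLT ι k u v) : u ≠ v := by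
  rintro rfl
  unfold TwistLT at h
  split_ifs at h <;> exact lt_irrefl _ h

theorem TwistLT.trans {k : ℕ} {u v w : A} (h₁ : TwistLT ι k u v) (h₂ : TwistLT ι k v w) :
    TwistLT ι k u w := by
  unfold TwistLT at *
  split_ifs at * <;> order

theorem twistLT_or_twistLT (hι : Injective ι) (k : ℕ) {u v : A} (huv : u ≠ v) :
    TwistLT ι k u v ∨ TwistLT ι k v u := by
  unfold TwistLT
  split_ifs
  · exact lt_or_gt_of_ne (hι.ne huv)
  · exact (lt_or_gt_of_ne (hι.ne huv)).symm

theorem twistLT_succ {k : ℕ} {u v : A} : TwistLT ι (k + 1) u v ↔ TwistLT ι k v u := by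
  unfold TwistLT
  by_cases hk : Even k <;> simp [hk, Nat.even_add_one]

theorem MergeLT.merges {x y : A} (h : MergeLT ι f x y) : Merges f x y :=
  let ⟨k, hk, _⟩ := h; ⟨k + 1, hk.2⟩

theorem mergeLT_irrefl (x : A) : ¬ MergeLT ι f x x := fun ⟨_, hk, _⟩ => hk.1 rfl

theorem MergeLT.trans {x y z : A} (h₁ : MergeLT ι f x y) (h₂ : MergeLT ι f y z) :
    MergeLT ι f x z := by
  obtain ⟨k, hk, hxy⟩ := h₁
  obtain ⟨j, hj, hyz⟩ := h₂
  rcases lt_trichotomy k j with hkj | rfl | hjk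
  · have e := hk.iterate_eq_iff.2 hkj
    have e' := hk.iterate_eq_iff.2 (hkj.trans j.lt_succ_self)
    exact ⟨j, ⟨e ▸ hj.1, e'.trans hj.2⟩, e ▸ hyz⟩
  · have hxz := hxy.trans hyz
    exact ⟨k, ⟨hxz.ne, hk.2.trans hj.2⟩, hxz⟩
  · have e := hj.iterate_eq_iff.2 hjk
    have e' := hj.iterate_eq_iff.2 (hjk.trans k.lt_succ_self)
    exact ⟨k, ⟨e ▸ hk.1, hk.2.trans e'⟩, e ▸ hxy⟩

theorem mergeLT_or_mergeLT (hι : Injective ι) {x y : A} (h : Merges f x y) (hne : x ≠ y) :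
    MergeLT ι f x y ∨ MergeLT ι f y x := by
  obtain ⟨n, hn⟩ := h
  obtain ⟨k, hk⟩ := exists_isLastDiff hn hne
  exact (twistLT_or_twistLT hι k hk.1).imp (fun h => ⟨k, hk, h⟩)
    fun h => ⟨k, ⟨Ne.symm hk.1, hk.2.symm⟩, h⟩

theorem MergeLT.map {x y : A} (h : MergeLT ι f x y) : f x = f y ∨ MergeLT ι f (f y) (f x) := by
  obtain ⟨_ | k, hk, hlt⟩ := h
  · exact Or.inl hk.2
  · refine Or.inr ⟨k, ⟨?_, ?_⟩, ?_⟩ <;> simp only [← iterate_succ_apply]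
    · exact Ne.symm hk.1
    · exact hk.2.symm
    · exact twistLT_succ.1 hlt

theorem mergeLT_of_twistLT_left {z x : A} (hz : ∀ k u, f^[k] z ≠ u → TwistLT ι k (f^[k] z) u)
    (h : Merges f z x) (hne : z ≠ x) : MergeLT ι f z x :=
  let ⟨_, hn⟩ := h
  let ⟨k, hk⟩ := exists_isLastDiff hn hne
  ⟨k, hk, hz k _ hk.1⟩

theorem mergeLT_of_twistLT_right {z x : A} (hz : ∀ k u, u ≠ f^[k] z → TwistLT ι k u (f^[k] z))
    (h : Merges f x z) (hne : x ≠ z) : MergeLT ι f x z :=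
  let ⟨_, hn⟩ := h
  let ⟨k, hk⟩ := exists_isLastDiff hn hne
  ⟨k, hk, hz k _ hk.1⟩

end MergeOrder

section KeyOrder

variable {A L K : Type*} [LinearOrder L] [LinearOrder K] (ι : A → L) (κ : A → K) (f : A → A)

def KeyLT (x y : A) : Prop := κ x < κ y ∨ κ x = κ y ∧ MergeLT ι f x y

variable {ι κ f}

instance : IsStrictOrder A (KeyLT ι κ f) where
  irrefl x h := h.elim (lt_irrefl _) fun h => mergeLT_irrefl x h.2
  trans x y z h₁ h₂ := by
    rcases h₁ with h₁ | ⟨e₁, h₁⟩ <;> rcases h₂ with h₂ | ⟨e₂, h₂⟩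
    · exact Or.inl (h₁.trans h₂)
    · exact Or.inl (e₂ ▸ h₁)
    · exact Or.inl (e₁ ▸ h₂)
    · exact Or.inr ⟨e₁.trans e₂, h₁.trans h₂⟩

theorem not_keyLT_of_not_merges {x y : A} (hκ : κ x = κ y) (h : ¬ Merges f x y) :
    ¬ KeyLT ι κ f x y :=
  fun h' => h'.elim (fun h' => h'.ne hκ) fun h' => h h'.2.merges

theorem key_eq_and_not_merges (hι : Injective ι) {x y : A} (hne : x ≠ y)
    (h₁ : ¬ KeyLT ι κ f x y) (h₂ : ¬ KeyLT ι κ f y x) : κ x = κ y ∧ ¬ Merges f x y := by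
  have hκ : κ x = κ y := by
    by_contra h
    rcases lt_or_gt_of_ne h with h | h
    · exact h₁ (Or.inl h)
    · exact h₂ (Or.inl h)
  refine ⟨hκ, fun hm => ?_⟩
  rcases mergeLT_or_mergeLT hι hm hne with h | h
  · exact h₁ (Or.inr ⟨hκ, h⟩)
  · exact h₂ (Or.inr ⟨hκ.symm, h⟩)

theorem KeyLT.map (hlt : ∀ x y, κ x < κ y → κ (f y) < κ (f x))
    (heq : ∀ x y, κ x = κ y → κ (f x) = κ (f y)) {x y : A} (h : KeyLT ι κ f x y) :
    f x = f y ∨ KeyLT ι κ f (f y) (f x) := by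
  rcases h with h | ⟨e, h⟩
  · exact Or.inr (Or.inl (hlt x y h))
  · exact h.map.imp_right fun h' => Or.inr ⟨(heq x y e).symm, h'⟩

theorem antitone_of_keyLT [PartialOrder A] (hlt' : ∀ x y, x < y ↔ KeyLT ι κ f x y)
    (hlt : ∀ x y, κ x < κ y → κ (f y) < κ (f x))
    (heq : ∀ x y, κ x = κ y → κ (f x) = κ (f y)) : Antitone f :=
  antitone_iff_forall_lt.2 fun x y h => (KeyLT.map hlt heq ((hlt' x y).1 h)).elim
    (fun e => e ▸ le_rfl) fun h' => ((hlt' _ _).2 h').le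

theorem key_lt_of_upper_bound {x y u : A} (hκ : κ x = κ y) (hxy : ¬ Merges f x y)
    (hx : x = u ∨ KeyLT ι κ f x u) (hy : y = u ∨ KeyLT ι κ f y u) : κ x < κ u := by
  by_contra hnot
  have merges_of : ∀ w, κ w = κ x → (w = u ∨ KeyLT ι κ f w u) → Merges f w u := by
    rintro w hw (rfl | h | ⟨-, h⟩)
    · exact .refl w
    · exact absurd (hw ▸ h) hnot
    · exact h.merges
  exact hxy ((merges_of x rfl hx).trans (merges_of y hκ.symm hy).symm)

theorem key_lt_of_lower_bound {x y u : A} (hκ : κ x = κ y) (hxy : ¬ Merges f x y)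
    (hx : u = x ∨ KeyLT ι κ f u x) (hy : u = y ∨ KeyLT ι κ f u y) : κ u < κ x := by
  by_contra hnot
  have merges_of : ∀ w, κ w = κ x → (u = w ∨ KeyLT ι κ f u w) → Merges f u w := by
    rintro w hw (rfl | h | ⟨-, h⟩)
    · exact .refl u
    · exact absurd (hw ▸ h) hnot
    · exact h.merges
  exact hxy ((merges_of x rfl hx).symm.trans (merges_of y hκ.symm hy))

end KeyOrder

section Lattices

variable {A : Type*}

open Classical in
noncomputable abbrev latticeOfIncomparable [PartialOrder A] (j m : A)
    (hj : ∀ x y, ¬ x ≤ y → ¬ y ≤ x → IsLUB {x, y} j)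
    (hm : ∀ x y, ¬ x ≤ y → ¬ y ≤ x → IsGLB {x, y} m) : Lattice A :=
  { ‹PartialOrder A› with
    sup := fun x y => if x ≤ y then y else if y ≤ x then x else j
    inf := fun x y => if x ≤ y then x else if y ≤ x then y else m
    le_sup_left := fun x y => by
      split_ifs with h₁ h₂
      exacts [h₁, le_rfl, (hj x y h₁ h₂).1 (by simp)]
    le_sup_right := fun x y => by
      split_ifs with h₁ h₂
      exacts [le_rfl, h₂, (hj x y h₁ h₂).1 (by simp)]
    sup_le := fun x y z hx hy => by
      split_ifs with h₁ h₂
      exacts [hy, hx, (hj x y h₁ h₂).2 (by simp [upperBounds, hx, hy])]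
    inf_le_left := fun x y => by
      split_ifs with h₁ h₂
      exacts [le_rfl, h₂, (hm x y h₁ h₂).1 (by simp)]
    inf_le_right := fun x y => by
      split_ifs with h₁ h₂
      exacts [h₁, le_rfl, (hm x y h₁ h₂).1 (by simp)]
    le_inf := fun x y z hx hy => by
      split_ifs with h₁ h₂
      exacts [hx, hy, (hm y z h₁ h₂).2 (by simp [lowerBounds, hx, hy])] }

theorem isLatAntiEndo_of_antitone [Lattice A] {f : A → A} (hf : Antitone f)
    (hinc : ∀ x y, ¬ x ≤ y → ¬ y ≤ x → f (x ⊔ y) = f x ⊓ f y ∧ f (x ⊓ y) = f x ⊔ f y) :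
    IsLatAntiEndo f := by
  intro x y
  by_cases hxy : x ≤ y
  · rw [sup_eq_right.2 hxy, inf_eq_left.2 hxy, inf_eq_right.2 (hf hxy), sup_eq_left.2 (hf hxy)]
    exact ⟨rfl, rfl⟩
  by_cases hyx : y ≤ x
  · rw [sup_eq_left.2 hyx, inf_eq_right.2 hyx, inf_eq_left.2 (hf hyx), sup_eq_right.2 (hf hyx)]
    exact ⟨rfl, rfl⟩
  exact hinc x y hxy hyx

end Lattices

section TwoCycle

variable {A : Type*} {f : A → A} {a b : A}

theorem iterate_of_swap (ha : f a = b) (hb : f b = a) (n : ℕ) :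
    f^[n] a = if Even n then a else b := by
  induction n with
  | zero => simp
  | succ n ih =>
    rw [iterate_succ_apply', ih]
    by_cases hn : Even n <;> simp [hn, Nat.even_add_one, ha, hb]

theorem not_merges_of_swap (hab : a ≠ b) (ha : f a = b) (hb : f b = a) : ¬ Merges f a b := by
  rintro ⟨n, hn⟩
  rw [iterate_of_swap ha hb, iterate_of_swap hb ha] at hn
  split_ifs at hn
  exacts [hab hn, hab hn.symm]

variable (f a b) in
open Classical in
noncomputable def zone (x : A) : Fin 3 :=
  if Merges f x a then 0 else if Merges f x b then 2 else 1

theorem zone_a : zone f a b a = 0 := by simp [zone, Merges.refl]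

theorem merges_of_zone_eq_zero {x : A} (h : zone f a b x = 0) : Merges f x a := by
  unfold zone at h
  split_ifs at h with h₁ <;> simp_all

theorem merges_of_zone_eq_two {x : A} (h : zone f a b x = 2) : Merges f x b := by
  unfold zone at h
  split_ifs at h with h₁ h₂ <;> simp_all

theorem zone_eq_one_of_not_merges {x y : A} (h : zone f a b x = zone f a b y)
    (hxy : ¬ Merges f x y) : zone f a b x = 1 := by
  by_contra h1
  have h02 : zone f a b x = 0 ∨ zone f a b x = 2 := by omega
  rcases h02 with h0 | h2
  · exact hxy ((merges_of_zone_eq_zero h0).trans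
      (merges_of_zone_eq_zero (h ▸ h0)).symm)
  · exact hxy ((merges_of_zone_eq_two h2).trans
      (merges_of_zone_eq_two (h ▸ h2)).symm)

section

variable (hab : a ≠ b) (ha : f a = b) (hb : f b = a)
include hab ha hb

theorem zone_map (x : A) : zone f a b (f x) = (zone f a b x).rev := by
  have hfa : Merges f (f x) b ↔ Merges f x a := by rw [← ha, merges_map_iff]
  have hfb : Merges f (f x) a ↔ Merges f x b := by rw [← hb, merges_map_iff]
  have hnab := not_merges_of_swap hab ha hb
  unfold zone
  by_cases hxa : Merges f x a
  · have hxb : ¬ Merges f (f x) a := fun h => hnab ((hfa.2 hxa).symm.trans h).symm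
    simp [hxa, hxb, hfa.2 hxa]
  · by_cases hxb : Merges f x b <;> simp [hxa, hxb, hfa, hfb]

theorem zone_b : zone f a b b = 2 := by
  rw [zone, if_neg fun h => not_merges_of_swap hab ha hb h.symm, if_pos (.refl b)]

end

end TwoCycle

section TwoCycleLattice

variable {A L : Type*} [LinearOrder L] {ι : A → L} {f : A → A} {a b : A}
  (hι : Injective ι) (hbot : ∀ x, ι b ≤ ι x) (htop : ∀ x, ι x ≤ ι a)
  (hab : a ≠ b) (ha : f a = b) (hb : f b = a)

include hι hbot htop ha hb in
theorem iterate_twistLT_of_swap (k : ℕ) (u : A) (h : f^[k] b ≠ u) :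
    TwistLT ι k (f^[k] b) u := by
  rw [iterate_of_swap hb ha] at h ⊢
  unfold TwistLT
  split_ifs at h ⊢
  · exact (hbot u).lt_of_ne (hι.ne h)
  · exact (htop u).lt_of_ne (hι.ne h.symm)

include hι hbot htop ha hb in
theorem twistLT_iterate_of_swap (k : ℕ) (u : A) (h : u ≠ f^[k] a) :
    TwistLT ι k u (f^[k] a) := by
  rw [iterate_of_swap ha hb] at h ⊢
  unfold TwistLT
  split_ifs at h ⊢
  · exact (htop u).lt_of_ne (hι.ne h)
  · exact (hbot u).lt_of_ne (hι.ne h.symm)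

section

variable [PartialOrder A] (hle : ∀ x y, x ≤ y ↔ x = y ∨ KeyLT ι (zone f a b) f x y)
include hι hle in
theorem zone_eq_one_of_incomparable {x y : A} (h₁ : ¬ x ≤ y) (h₂ : ¬ y ≤ x) :
    zone f a b x = 1 ∧ zone f a b y = 1 ∧ ¬ Merges f x y := by
  obtain ⟨hκ, hxy⟩ := key_eq_and_not_merges hι (fun e => h₁ ((hle x y).2 (Or.inl e)))
    (fun h => h₁ ((hle x y).2 (Or.inr h))) (fun h => h₂ ((hle y x).2 (Or.inr h)))
  have hx := zone_eq_one_of_not_merges hκ hxy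
  exact ⟨hx, hκ ▸ hx, hxy⟩

include hι hbot htop hab ha hb hle in
theorem isLUB_of_incomparable {x y : A} (h₁ : ¬ x ≤ y) (h₂ : ¬ y ≤ x) : IsLUB {x, y} b := by
  obtain ⟨hx, hy, hxy⟩ := zone_eq_one_of_incomparable hι hle h₁ h₂
  have hb2 := zone_b hab ha hb
  refine ⟨?_, fun u hu => (hle b u).2 ?_⟩
  · rintro z (rfl | rfl) <;> exact (hle _ _).2 (Or.inr (Or.inl (by simp [hx, hy, hb2])))
  have hu2 : zone f a b u = 2 := by
    have := key_lt_of_upper_bound (hx.trans hy.symm) hxy ((hle x u).1 (hu (by simp)))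
      ((hle y u).1 (hu (by simp)))
    rw [hx] at this
    exact (by decide : ∀ t : Fin 3, 1 < t → t = 2) _ this
  rcases eq_or_ne b u with e | hne
  · exact Or.inl e
  · exact Or.inr (Or.inr ⟨hb2.trans hu2.symm, mergeLT_of_twistLT_left
      (iterate_twistLT_of_swap hι hbot htop ha hb) (merges_of_zone_eq_two hu2).symm hne⟩)

include hι hbot htop ha hb hle in
theorem isGLB_of_incomparable {x y : A} (h₁ : ¬ x ≤ y) (h₂ : ¬ y ≤ x) : IsGLB {x, y} a := by
  obtain ⟨hx, hy, hxy⟩ := zone_eq_one_of_incomparable hι hle h₁ h₂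
  refine ⟨?_, fun u hu => (hle u a).2 ?_⟩
  · rintro z (rfl | rfl) <;> exact (hle _ _).2 (Or.inr (Or.inl (by simp [hx, hy, zone_a])))
  have hu0 : zone f a b u = 0 := by
    have := key_lt_of_lower_bound (hx.trans hy.symm) hxy ((hle u x).1 (hu (by simp)))
      ((hle u y).1 (hu (by simp)))
    rw [hx] at this
    exact (by decide : ∀ t : Fin 3, t < 1 → t = 0) _ this
  rcases eq_or_ne u a with e | hne
  · exact Or.inl e
  · exact Or.inr (Or.inr ⟨hu0.trans zone_a.symm, mergeLT_of_twistLT_right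
      (twistLT_iterate_of_swap hι hbot htop ha hb) (merges_of_zone_eq_zero hu0) hne⟩)

include hι hab ha hb hle in
theorem not_le_map_of_incomparable {x y : A} (h₁ : ¬ x ≤ y) (h₂ : ¬ y ≤ x) :
    ¬ f x ≤ f y := by
  obtain ⟨hx, hy, hxy⟩ := zone_eq_one_of_incomparable hι hle h₁ h₂
  have hfxy : ¬ Merges f (f x) (f y) := mt merges_map_iff.1 hxy
  rintro h
  rcases (hle _ _).1 h with e | h
  · exact hfxy (e ▸ .refl _)
  · refine not_keyLT_of_not_merges ?_ hfxy h
    rw [zone_map hab ha hb, zone_map hab ha hb, hx, hy]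

end

include hι hbot htop hab ha hb in
theorem exists_lattice_of_swap_of_labels : ∃ _ : Lattice A, IsLatAntiEndo f := by
  let _ : PartialOrder A := partialOrderOfSO (KeyLT ι (zone f a b) f)
  have hle : ∀ x y, x ≤ y ↔ x = y ∨ KeyLT ι (zone f a b) f x y := fun _ _ => Iff.rfl
  let _ : Lattice A := latticeOfIncomparable b a
    (fun _ _ => isLUB_of_incomparable hι hbot htop hab ha hb hle)
    (fun _ _ => isGLB_of_incomparable hι hbot htop ha hb hle)
  refine ⟨‹_›, isLatAntiEndo_of_antitone ?_ fun x y h₁ h₂ => ?_⟩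
  · refine antitone_of_keyLT (fun _ _ => Iff.rfl) (fun x y h => ?_) fun x y h => ?_
    · simpa only [zone_map hab ha hb] using Fin.rev_lt_rev.2 h
    · simp only [zone_map hab ha hb, h]
  · have hf₁ := not_le_map_of_incomparable hι hab ha hb hle h₁ h₂
    have hf₂ := not_le_map_of_incomparable hι hab ha hb hle h₂ h₁
    rw [isLUB_pair.unique (isLUB_of_incomparable hι hbot htop hab ha hb hle h₁ h₂),
      isGLB_pair.unique (isGLB_of_incomparable hι hbot htop ha hb hle h₁ h₂),
      isLUB_pair.unique (isLUB_of_incomparable hι hbot htop hab ha hb hle hf₁ hf₂),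
      isGLB_pair.unique (isGLB_of_incomparable hι hbot htop ha hb hle hf₁ hf₂)]
    exact ⟨hb, ha⟩

end TwoCycleLattice

universe u in
theorem exists_labels_bot_top {A : Type u} {a b : A} (hab : a ≠ b) :
    ∃ ι : A → Lex (ℕ × Cardinal.{u}), Injective ι ∧ (∀ x, ι b ≤ ι x) ∧ ∀ x, ι x ≤ ι a := by
  classical
  refine ⟨fun x => toLex (if x = b then 0 else if x = a then 2 else 1, embeddingToCardinal x),
    fun x y h => embeddingToCardinal.injective (congrArg (fun p => (ofLex p).2) h),
    fun x => ?_, fun x => ?_⟩ <;>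
  by_cases hxb : x = b <;> by_cases hxa : x = a <;>
    simp_all [Prod.Lex.toLex_le_toLex, hab.symm]

theorem exists_lattice_of_hasCycle_two {A : Type*} {f : A → A} (h : HasCycle f 2) :
    ∃ _ : Lattice A, IsLatAntiEndo f := by
  obtain ⟨a, b, hab, ha, hb⟩ := hasCycle_two_iff.1 h
  obtain ⟨ι, hι, hbot, htop⟩ := exists_labels_bot_top hab
  exact exists_lattice_of_swap_of_labels hι hbot htop hab ha hb

section GrandOrbit

variable {A : Type*} {f : A → A}

def EventuallyFixed (f : A → A) (x : A) : Prop := ∃ n, IsFixedPt f (f^[n] x)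

theorem eventuallyFixed_iterate_iff {x : A} (n : ℕ) :
    EventuallyFixed f (f^[n] x) ↔ EventuallyFixed f x := by
  refine ⟨fun ⟨m, hm⟩ => ⟨m + n, by rwa [iterate_add_apply]⟩, fun ⟨m, hm⟩ => ⟨m, ?_⟩⟩
  rw [← iterate_add_apply, add_comm, iterate_add_apply, iterate_fixed hm]
  exact hm

theorem eventuallyFixed_congr {x y : A} {p q : ℕ} (h : f^[p] x = f^[q] y) :
    EventuallyFixed f x ↔ EventuallyFixed f y := by
  rw [← eventuallyFixed_iterate_iff p, h, eventuallyFixed_iterate_iff]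

theorem merges_of_eventuallyFixed (hfix : ∀ u v, f u = u → f v = v → u = v) {x y : A}
    (hx : EventuallyFixed f x) (hy : EventuallyFixed f y) : Merges f x y := by
  obtain ⟨m, hm⟩ := hx
  obtain ⟨n, hn⟩ := hy
  have hx : f^[m + n] x = f^[m] x := by rw [add_comm, iterate_add_apply, iterate_fixed hm]
  have hy : f^[m + n] y = f^[n] y := by rw [iterate_add_apply, iterate_fixed hn]
  exact ⟨m + n, by rw [hx, hy]; exact hfix _ _ hm hn⟩

theorem iterate_injective_of_not_eventuallyFixed
    (hper : ∀ x n, 0 < n → IsPeriodicPt f n x → IsFixedPt f x) {x : A}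
    (hx : ¬ EventuallyFixed f x) : Injective fun n => f^[n] x := by
  intro i j hij
  by_contra hne
  wlog hlt : i < j generalizing i j
  · exact this hij.symm (Ne.symm hne) (by omega)
  refine hx ⟨i, hper _ (j - i) (by omega) ?_⟩
  change f^[j - i] (f^[i] x) = f^[i] x
  rw [← iterate_add_apply, Nat.sub_add_cancel hlt.le]
  exact hij.symm

def grandOrbitSetoid (f : A → A) : Setoid A where
  r x y := ∃ p q, f^[p] x = f^[q] y
  iseqv :=
    { refl := fun _ => ⟨0, 0, rfl⟩
      symm := fun ⟨p, q, h⟩ => ⟨q, p, h.symm⟩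
      trans := fun ⟨p, q, h⟩ ⟨p', q', h'⟩ => ⟨p' + p, q + q', by
        rw [iterate_add_apply, h, ← iterate_add_apply, add_comm p' q, iterate_add_apply, h',
          ← iterate_add_apply]⟩ }

noncomputable def orbitBase (f : A → A) (x : A) : A :=
  (Quotient.mk (grandOrbitSetoid f) x).out

theorem exists_iterate_orbitBase (x : A) :
    ∃ n : ℕ × ℕ, f^[n.1] (orbitBase f x) = f^[n.2] x :=
  let ⟨p, q, h⟩ := Quotient.mk_out (s := grandOrbitSetoid f) x
  ⟨(p, q), h⟩

theorem orbitBase_map (x : A) : orbitBase f (f x) = orbitBase f x :=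
  congrArg Quotient.out (Quotient.sound ⟨0, 1, rfl⟩)

/-- Height of `x` above the base point of its grand orbit; meaningful only when `x` is not
eventually fixed. -/
noncomputable def level (f : A → A) (x : A) : ℤ :=
  ((exists_iterate_orbitBase (f := f) x).choose.1 : ℤ) -
    (exists_iterate_orbitBase (f := f) x).choose.2

variable (hper : ∀ x n, 0 < n → IsPeriodicPt f n x → IsFixedPt f x)
include hper

theorem level_eq {x : A} (hx : ¬ EventuallyFixed f x) {p q : ℕ}
    (h : f^[p] (orbitBase f x) = f^[q] x) : level f x = p - q := by
  have h₀ := (exists_iterate_orbitBase (f := f) x).choose_spec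
  have hb : ¬ EventuallyFixed f (orbitBase f x) := by rwa [eventuallyFixed_congr h]
  have key : (exists_iterate_orbitBase (f := f) x).choose.2 + p =
      q + (exists_iterate_orbitBase (f := f) x).choose.1 := by
    refine iterate_injective_of_not_eventuallyFixed hper hb ?_
    simp only [iterate_add_apply, h, h₀]
    rw [← iterate_add_apply, ← iterate_add_apply, add_comm]
  unfold level
  omega

theorem level_map {x : A} (hx : ¬ EventuallyFixed f x) : level f (f x) = level f x + 1 := by
  obtain ⟨⟨p, q⟩, h⟩ := exists_iterate_orbitBase (f := f) x
  have hfx : ¬ EventuallyFixed f (f x) := (eventuallyFixed_iterate_iff 1).not.2 hx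
  have h' : f^[p + 1] (orbitBase f (f x)) = f^[q] (f x) := by
    rw [orbitBase_map, iterate_succ_apply', h, ← iterate_succ_apply' f q x, iterate_succ_apply]
  rw [level_eq hper hx h, level_eq hper hfx h']
  push_cast
  ring

theorem merges_of_level_eq {x y : A} (hx : ¬ EventuallyFixed f x) (hy : ¬ EventuallyFixed f y)
    (hb : orbitBase f x = orbitBase f y) (hl : level f x = level f y) : Merges f x y := by
  obtain ⟨⟨p, q⟩, h⟩ := exists_iterate_orbitBase (f := f) x
  obtain ⟨⟨p', q'⟩, h'⟩ := exists_iterate_orbitBase (f := f) y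
  rw [level_eq hper hx h, level_eq hper hy h'] at hl
  have e : p + q' = p' + q := by omega
  refine ⟨q + q', ?_⟩
  calc f^[q + q'] x = f^[q'] (f^[p] (orbitBase f x)) := by
        rw [h, ← iterate_add_apply, add_comm]
    _ = f^[q] (f^[p'] (orbitBase f y)) := by
        rw [← iterate_add_apply, ← iterate_add_apply, add_comm q', e, add_comm, hb]
    _ = f^[q + q'] y := by rw [h', ← iterate_add_apply]

end GrandOrbit

section ClassKey

variable {L : Type*}

abbrev ClassKey (L : Type*) := (L ×ₗ ℤ) ⊕ₗ (Unit ⊕ₗ (L ×ₗ ℤ)ᵒᵈ)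

def classKey (p : Prop) [Decidable p] (a : L) (n : ℤ) : ClassKey L :=
  if p then toLex (.inr (toLex (.inl ())))
  else if Even n then toLex (.inl (toLex (a, n)))
  else toLex (.inr (toLex (.inr (OrderDual.toDual (toLex (a, n))))))

variable {p q : Prop} [Decidable p] [Decidable q] {a b : L} {m n : ℤ}

theorem classKey_succ_lt_succ [LinearOrder L] (h : classKey p a m < classKey q b n) :
    classKey q b (n + 1) < classKey p a (m + 1) := by
  unfold classKey at *
  by_cases hp : p <;> by_cases hq : q <;> by_cases hm : Even m <;> by_cases hn : Even n <;>
    simp_all [Prod.Lex.toLex_lt_toLex, ← Int.not_even_iff_odd]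

theorem classKey_succ_congr (h : classKey p a m = classKey q b n) :
    classKey p a (m + 1) = classKey q b (n + 1) := by
  unfold classKey at *
  by_cases hp : p <;> by_cases hq : q <;> by_cases hm : Even m <;> by_cases hn : Even n <;>
    simp_all [← Int.not_even_iff_odd]

theorem eq_of_classKey_eq (h : classKey p a m = classKey q b n) :
    p ∧ q ∨ ¬ p ∧ ¬ q ∧ a = b ∧ m = n := by
  unfold classKey at *
  by_cases hp : p <;> by_cases hq : q <;> by_cases hm : Even m <;> by_cases hn : Even n <;>
    simp_all

end ClassKey

section NoProperCycles

variable {A L : Type*} {f : A → A}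

open Classical in
variable (f) in
noncomputable def orbitKey (ι : A → L) (x : A) : ClassKey L :=
  classKey (EventuallyFixed f x) (ι (orbitBase f x)) (level f x)

variable (hper : ∀ x n, 0 < n → IsPeriodicPt f n x → IsFixedPt f x)
include hper

open Classical in
theorem orbitKey_map (ι : A → L) (x : A) :
    orbitKey f ι (f x) = classKey (EventuallyFixed f x) (ι (orbitBase f x)) (level f x + 1) := by
  have hfx : EventuallyFixed f (f x) ↔ EventuallyFixed f x := eventuallyFixed_iterate_iff 1
  by_cases hx : EventuallyFixed f x
  · simp [orbitKey, classKey, hx, hfx]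
  · rw [orbitKey, orbitBase_map, level_map hper hx]
    simp only [hfx]

theorem exists_linearOrder_antitone (hfix : ∀ u v, f u = u → f v = v → u = v) :
    ∃ _ : LinearOrder A, Antitone f := by
  classical
  let ι := embeddingToCardinal (α := A)
  have hlt : ∀ x y, orbitKey f ι x < orbitKey f ι y → orbitKey f ι (f y) < orbitKey f ι (f x) :=
    fun x y h => by
      rw [orbitKey_map hper, orbitKey_map hper]
      exact classKey_succ_lt_succ h
  have heq : ∀ x y, orbitKey f ι x = orbitKey f ι y → orbitKey f ι (f x) = orbitKey f ι (f y) :=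
    fun x y h => by
      rw [orbitKey_map hper, orbitKey_map hper]
      exact classKey_succ_congr h
  have hmerges : ∀ x y, orbitKey f ι x = orbitKey f ι y → Merges f x y := fun x y h => by
    rcases eq_of_classKey_eq h with ⟨hx, hy⟩ | ⟨hx, hy, hb, hl⟩
    · exact merges_of_eventuallyFixed hfix hx hy
    · exact merges_of_level_eq hper hx hy (ι.injective hb) hl
  have : IsStrictTotalOrder A (KeyLT ι (orbitKey f ι) f) :=
    { trichotomous := fun x y h₁ h₂ => by
        by_contra hne
        obtain ⟨hκ, hxy⟩ := key_eq_and_not_merges ι.injective hne h₁ h₂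
        exact hxy (hmerges x y hκ) }
  let _ : LinearOrder A := linearOrderOfSTO (KeyLT ι (orbitKey f ι) f)
  exact ⟨‹_›, antitone_of_keyLT (fun _ _ => Iff.rfl) hlt heq⟩

end NoProperCycles

/-- There is a lattice structure on `A` making `f` a lattice
anti-endomorphism iff `f` has a cycle of length 2, or `f` has no proper cycles
and at most one fixed point. -/
theorem lattice_antiEndo_iff {A : Type*} (f : A → A) :
    (∃ inst : Lattice A, @IsLatAntiEndo A inst f) ↔
      (HasCycle f 2 ∨
        ((∀ n : ℕ, 2 ≤ n → ¬ HasCycle f n) ∧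
          ∀ u v : A, f u = u → f v = v → u = v)) := by
  constructor
  · rintro ⟨_, hf⟩
    by_cases h2 : HasCycle f 2
    · exact Or.inl h2
    · exact Or.inr ⟨fun n hn hc => h2 (hf.hasCycle_two_of_hasCycle hn hc),
        fun u v => hf.eq_of_isFixedPt h2⟩
  · rintro (h2 | ⟨hcyc, hfix⟩)
    · exact exists_lattice_of_hasCycle_two h2
    · obtain ⟨_, hanti⟩ := exists_linearOrder_antitone (isFixedPt_of_isPeriodicPt hcyc) hfix
      exact ⟨inferInstance, isLatAntiEndo_of_antitone hanti fun x y h₁ h₂ =>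
        absurd (le_total x y) (not_or.2 ⟨h₁, h₂⟩)⟩
end

section
/- For every set A and every function f : A → A, there exists a partial order on A making A a conditional lattice such that f is an anti-endomorphism of this conditional lattice. -/
/-- A partial order is a conditional lattice: any two elements with a common
upper bound have a least upper bound, and any two elements with a common lower
bound have a greatest lower bound. -/
def IsCondLattice (A : Type*) [PartialOrder A] : Prop :=
  (∀ x y : A, (∃ u, x ≤ u ∧ y ≤ u) → ∃ s, IsLUB {x, y} s) ∧
  (∀ x y : A, (∃ l, l ≤ x ∧ l ≤ y) → ∃ s, IsGLB {x, y} s)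

/-- `f` is an anti-endomorphism of the conditional lattice: `x ⊔ y` exists iff
`f x ⊓ f y` exists and then `f (x ⊔ y) = f x ⊓ f y`, and dually. -/
def IsCondAntiEndo {A : Type*} [PartialOrder A] (f : A → A) : Prop :=
  (∀ x y : A, ((∃ s, IsLUB {x, y} s) ↔ ∃ t, IsGLB {f x, f y} t) ∧
    (∀ s, IsLUB {x, y} s → IsGLB {f x, f y} (f s))) ∧
  (∀ x y : A, ((∃ s, IsGLB {x, y} s) ↔ ∃ t, IsLUB {f x, f y} t) ∧
    (∀ s, IsGLB {x, y} s → IsLUB {f x, f y} (f s)))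

namespace CLProof

open Function

variable {A : Type*}

/-- Strict order: compare orbits at the last index where they differ,
orientation alternating with the parity of that index. -/
def Lt (f : A → A) (x y : A) : Prop :=
  ∃ n, f^[n+1] x = f^[n+1] y ∧ f^[n] x ≠ f^[n] y ∧
    ((Even n ∧ WellOrderingRel (f^[n] x) (f^[n] y)) ∨
     (¬ Even n ∧ WellOrderingRel (f^[n] y) (f^[n] x)))

lemma eq_les (f : A → A) {x y : A} {n : ℕ} (h : f^[n] x = f^[n] y)
    {m : ℕ} (hm : n ≤ m) : f^[m] x = f^[m] y := by
  obtain ⟨k, rfl⟩ := Nat.exists_eq_add_of_le hm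
  rw [Nat.add_comm, iterate_add_apply, iterate_add_apply, h]

lemma wasymm {a b : A} (h1 : WellOrderingRel a b) (h2 : WellOrderingRel b a) : False :=
  (IsWellFounded.wf : WellFounded (WellOrderingRel : A → A → Prop)).asymmetric _ _ h1 h2

lemma lt_uniq (f : A → A) {x y : A} {n m : ℕ}
    (h1 : f^[n+1] x = f^[n+1] y) (h2 : f^[m] x ≠ f^[m] y) : m ≤ n := by
  by_contra h
  exact h2 (eq_les f h1 (by omega))

lemma lt_asymm' (f : A → A) {x y : A} (h1 : Lt f x y) (h2 : Lt f y x) : False := by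
  obtain ⟨n, hn1, hn2, hn3⟩ := h1
  obtain ⟨m, hm1, hm2, hm3⟩ := h2
  have hnm : n = m :=
    le_antisymm (lt_uniq f hm1.symm hn2) (lt_uniq f hn1 (fun h => hm2 h.symm))
  subst hnm
  rcases hn3 with ⟨he, hr⟩ | ⟨he, hr⟩ <;> rcases hm3 with ⟨he', hr'⟩ | ⟨he', hr'⟩
  · exact wasymm hr hr'
  · exact he' he
  · exact he he'
  · exact wasymm hr hr'

lemma lt_trans' (f : A → A) {x y z : A} (h1 : Lt f x y) (h2 : Lt f y z) : Lt f x z := by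
  obtain ⟨n, hn1, hn2, hn3⟩ := h1
  obtain ⟨m, hm1, hm2, hm3⟩ := h2
  rcases lt_trichotomy n m with h | rfl | h
  · have hxy : f^[m] x = f^[m] y := eq_les f hn1 h
    have hxy' : f^[m+1] x = f^[m+1] y := eq_les f hn1 (by omega)
    refine ⟨m, by rw [hxy', hm1], by rw [hxy]; exact hm2, ?_⟩
    rw [hxy]
    exact hm3
  · by_cases hac : f^[n] x = f^[n] z
    · exfalso
      rcases hn3 with ⟨he, hr⟩ | ⟨he, hr⟩ <;> rcases hm3 with ⟨he', hr'⟩ | ⟨he', hr'⟩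
      · rw [← hac] at hr'; exact wasymm hr hr'
      · exact he' he
      · exact he he'
      · rw [← hac] at hr'; exact wasymm hr' hr
    · refine ⟨n, by rw [hn1, hm1], hac, ?_⟩
      rcases hn3 with ⟨he, hr⟩ | ⟨he, hr⟩ <;> rcases hm3 with ⟨he', hr'⟩ | ⟨he', hr'⟩
      · exact Or.inl ⟨he, IsTrans.trans _ _ _ hr hr'⟩
      · exact (he' he).elim
      · exact (he he').elim
      · exact Or.inr ⟨he, IsTrans.trans _ _ _ hr' hr⟩
  · have hyz : f^[n] y = f^[n] z := eq_les f hm1 h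
    have hyz' : f^[n+1] y = f^[n+1] z := eq_les f hm1 (by omega)
    refine ⟨n, by rw [hn1, hyz'], by rw [← hyz]; exact hn2, ?_⟩
    rw [← hyz]
    exact hn3

/-- Same class : the orbits eventually merge. -/
def SC (f : A → A) (x y : A) : Prop := ∃ n, f^[n] x = f^[n] y

lemma sc_symm {f : A → A} {x y : A} (h : SC f x y) : SC f y x :=
  let ⟨n, h⟩ := h; ⟨n, h.symm⟩

lemma sc_trans {f : A → A} {x y z : A} (h1 : SC f x y) (h2 : SC f y z) : SC f x z :=
  let ⟨n, h⟩ := h1; let ⟨m, h'⟩ := h2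
  ⟨max n m, (eq_les f h (le_max_left _ _)).trans (eq_les f h' (le_max_right _ _))⟩

lemma lt_sc {f : A → A} {x y : A} (h : Lt f x y) : SC f x y :=
  let ⟨n, h1, _⟩ := h; ⟨n+1, h1⟩

lemma sc_total (f : A → A) {x y : A} (h : SC f x y) : x = y ∨ Lt f x y ∨ Lt f y x := by
  classical
  by_cases hxy : x = y
  · exact Or.inl hxy
  right
  have hm := Nat.find_spec h
  have hm0 : Nat.find h ≠ 0 := by
    intro h0; rw [h0] at hm; exact hxy (by simpa using hm)
  obtain ⟨k, hk⟩ := Nat.exists_eq_succ_of_ne_zero hm0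
  have hkm : f^[k] x ≠ f^[k] y := Nat.find_min h (by omega)
  have heq : f^[k+1] x = f^[k+1] y := by rw [show k + 1 = Nat.find h from hk.symm]; exact hm
  rcases trichotomous_of WellOrderingRel (f^[k] x) (f^[k] y) with hr | hr | hr
  · by_cases he : Even k
    · exact Or.inl ⟨k, heq, hkm, Or.inl ⟨he, hr⟩⟩
    · exact Or.inr ⟨k, heq.symm, fun h' => hkm h'.symm, Or.inr ⟨he, hr⟩⟩
  · exact absurd hr hkm
  · by_cases he : Even k
    · exact Or.inr ⟨k, heq.symm, fun h' => hkm h'.symm, Or.inl ⟨he, hr⟩⟩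
    · exact Or.inl ⟨k, heq, hkm, Or.inr ⟨he, hr⟩⟩

lemma lt_anti (f : A → A) {x y : A} (h : Lt f x y) : f y = f x ∨ Lt f (f y) (f x) := by
  obtain ⟨n, h1, h2, h3⟩ := h
  rcases n with _ | k
  · exact Or.inl (by simpa using h1.symm)
  · refine Or.inr ⟨k, ?_, ?_, ?_⟩
    · show f^[k+1] (f y) = f^[k+1] (f x)
      rw [← iterate_succ_apply, ← iterate_succ_apply]
      exact h1.symm
    · show f^[k] (f y) ≠ f^[k] (f x)
      rw [← iterate_succ_apply, ← iterate_succ_apply]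
      exact fun h => h2 h.symm
    · rw [← iterate_succ_apply, ← iterate_succ_apply]
      rcases h3 with ⟨he, hr⟩ | ⟨he, hr⟩
      · exact Or.inr ⟨by simpa [Nat.even_add_one] using he, hr⟩
      · exact Or.inl ⟨by simpa [Nat.even_add_one] using he, hr⟩

lemma sc_shift (f : A → A) {x y : A} : SC f x y ↔ SC f (f x) (f y) := by
  constructor
  · rintro ⟨n, h⟩
    exact ⟨n, by rw [← iterate_succ_apply, ← iterate_succ_apply]; exact eq_les f h (by omega)⟩
  · rintro ⟨n, h⟩
    exact ⟨n+1, by rw [iterate_succ_apply, iterate_succ_apply]; exact h⟩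

def Le (f : A → A) (x y : A) : Prop := x = y ∨ Lt f x y

noncomputable def PO (f : A → A) : PartialOrder A where
  le := Le f
  le_refl x := Or.inl rfl
  le_trans x y z h1 h2 := by
    rcases h1 with rfl | h1
    · exact h2
    rcases h2 with rfl | h2
    · exact Or.inr h1
    · exact Or.inr (lt_trans' f h1 h2)
  le_antisymm x y h1 h2 := by
    rcases h1 with rfl | h1
    · rfl
    rcases h2 with rfl | h2
    · rfl
    · exact absurd h2 (fun h => lt_asymm' f h1 h)

lemma le_anti (f : A → A) {x y : A} (h : Le f x y) : Le f (f y) (f x) := by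
  rcases h with rfl | h
  · exact Or.inl rfl
  · rcases lt_anti f h with h | h
    · exact Or.inl h
    · exact Or.inr h

lemma le_sc {f : A → A} {x y : A} (h : Le f x y) : SC f x y := by
  rcases h with rfl | h
  · exact ⟨0, rfl⟩
  · exact lt_sc h

lemma isLUB_pair (f : A → A) {x y : A} (h : Le f x y) :
    @IsLUB A (PO f).toLE {x, y} y := by
  constructor
  · rintro z hz
    simp only [Set.mem_insert_iff, Set.mem_singleton_iff] at hz
    rcases hz with rfl | rfl
    · exact h
    · exact Or.inl rfl
  · rintro u hu
    exact hu (by simp)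

lemma isGLB_pair (f : A → A) {x y : A} (h : Le f x y) :
    @IsGLB A (PO f).toLE {x, y} x := by
  constructor
  · rintro z hz
    simp only [Set.mem_insert_iff, Set.mem_singleton_iff] at hz
    rcases hz with rfl | rfl
    · exact Or.inl rfl
    · exact h
  · rintro u hu
    exact hu (by simp)

lemma lub_sc (f : A → A) {x y s : A} (h : @IsLUB A (PO f).toLE {x, y} s) :
    SC f x y := by
  have hx : Le f x s := h.1 (by simp)
  have hy : Le f y s := h.1 (by simp)
  exact sc_trans (le_sc hx) (sc_symm (le_sc hy))

lemma glb_sc (f : A → A) {x y s : A} (h : @IsGLB A (PO f).toLE {x, y} s) :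
    SC f x y := by
  have hx : Le f s x := h.1 (by simp)
  have hy : Le f s y := h.1 (by simp)
  exact sc_trans (sc_symm (le_sc hx)) (le_sc hy)

lemma sc_lub (f : A → A) {x y : A} (h : SC f x y) :
    ∃ s, @IsLUB A (PO f).toLE {x, y} s := by
  rcases sc_total f h with rfl | h | h
  · exact ⟨x, isLUB_pair f (Or.inl rfl)⟩
  · exact ⟨y, isLUB_pair f (Or.inr h)⟩
  · exact ⟨x, by rw [Set.pair_comm]; exact isLUB_pair f (Or.inr h)⟩

lemma sc_glb (f : A → A) {x y : A} (h : SC f x y) :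
    ∃ s, @IsGLB A (PO f).toLE {x, y} s := by
  rcases sc_total f h with rfl | h | h
  · exact ⟨x, isGLB_pair f (Or.inl rfl)⟩
  · exact ⟨x, isGLB_pair f (Or.inr h)⟩
  · exact ⟨y, by rw [Set.pair_comm]; exact isGLB_pair f (Or.inr h)⟩

lemma lub_val (f : A → A) {x y s : A} (h : @IsLUB A (PO f).toLE {x, y} s) :
    @IsGLB A (PO f).toLE {f x, f y} (f s) := by
  have hx : Le f x s := h.1 (by simp)
  have hy : Le f y s := h.1 (by simp)
  rcases sc_total f (lub_sc f h) with rfl | hxy | hxy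
  · have hs : Le f s x := h.2 (isLUB_pair f (Or.inl rfl)).1
    have hsx : s = x := (PO f).le_antisymm s x hs hx
    subst hsx
    exact isGLB_pair f (Or.inl rfl)
  · have hs : Le f s y := h.2 (isLUB_pair f (Or.inr hxy)).1
    have hsy : s = y := (PO f).le_antisymm s y hs hy
    subst hsy
    rw [Set.pair_comm]
    exact isGLB_pair f (le_anti f (Or.inr hxy))
  · have h' : @IsLUB A (PO f).toLE {x, y} x := by
      rw [Set.pair_comm]; exact isLUB_pair f (Or.inr hxy)
    have hs : Le f s x := h.2 h'.1
    have hsx : s = x := (PO f).le_antisymm s x hs hx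
    subst hsx
    exact isGLB_pair f (le_anti f (Or.inr hxy))

lemma glb_val (f : A → A) {x y s : A} (h : @IsGLB A (PO f).toLE {x, y} s) :
    @IsLUB A (PO f).toLE {f x, f y} (f s) := by
  have hx : Le f s x := h.1 (by simp)
  have hy : Le f s y := h.1 (by simp)
  rcases sc_total f (glb_sc f h) with rfl | hxy | hxy
  · have hs : Le f x s := h.2 (isGLB_pair f (Or.inl rfl)).1
    have hsx : s = x := (PO f).le_antisymm s x hx ((PO f).le_trans x x s (Or.inl rfl) hs)
    subst hsx
    exact isLUB_pair f (Or.inl rfl)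
  · have hs : Le f x s := h.2 (isGLB_pair f (Or.inr hxy)).1
    have hsx : s = x := (PO f).le_antisymm s x hx hs
    subst hsx
    rw [Set.pair_comm]
    exact isLUB_pair f (le_anti f (Or.inr hxy))
  · have h' : @IsGLB A (PO f).toLE {x, y} y := by
      rw [Set.pair_comm]; exact isGLB_pair f (Or.inr hxy)
    have hs : Le f y s := h.2 h'.1
    have hsy : s = y := (PO f).le_antisymm s y hy hs
    subst hsy
    exact isLUB_pair f (le_anti f (Or.inr hxy))

end CLProof

/-- **Conditional Lattice Lemma.** Every function `f : A → A` is
an anti-endomorphism of some conditional lattice on `A`. -/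
theorem exists_condLattice_antiEndo {A : Type*} (f : A → A) :
    ∃ inst : PartialOrder A, @IsCondLattice A inst ∧ @IsCondAntiEndo A inst f := by
  refine ⟨CLProof.PO f, ⟨?_, ?_⟩, ?_, ?_⟩
  · rintro x y ⟨u, hx, hy⟩
    exact CLProof.sc_lub f (CLProof.sc_trans (CLProof.le_sc hx) (CLProof.sc_symm (CLProof.le_sc hy)))
  · rintro x y ⟨l, hx, hy⟩
    exact CLProof.sc_glb f (CLProof.sc_trans (CLProof.sc_symm (CLProof.le_sc hx)) (CLProof.le_sc hy))
  · intro x y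
    refine ⟨⟨?_, ?_⟩, ?_⟩
    · rintro ⟨s, hs⟩
      exact CLProof.sc_glb f ((CLProof.sc_shift f).mp (CLProof.lub_sc f hs))
    · rintro ⟨t, ht⟩
      exact CLProof.sc_lub f ((CLProof.sc_shift f).mpr (CLProof.glb_sc f ht))
    · intro s hs
      exact CLProof.lub_val f hs
  · intro x y
    refine ⟨⟨?_, ?_⟩, ?_⟩
    · rintro ⟨s, hs⟩
      exact CLProof.sc_lub f ((CLProof.sc_shift f).mp (CLProof.glb_sc f hs))
    · rintro ⟨t, ht⟩
      exact CLProof.sc_glb f ((CLProof.sc_shift f).mpr (CLProof.lub_sc f ht))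
    · intro s hs
      exact CLProof.glb_val f hs
end

section
/- Let f be a lattice anti-endomorphism of a lattice (A, ⊔, ⊓) and let x₁,…,xₙ (n ≥ 2) be a proper cycle with respect to f. Then the elements p = x₁ ⊔ x₂ ⊔ ⋯ ⊔ xₙ and q = x₁ ⊓ x₂ ⊓ ⋯ ⊓ xₙ satisfy p ≠ q, f(p) = q and f(q) = p; that is, p, q form a cycle of length 2 with respect to f. -/
namespace IsLatAntiEndo

variable {A ι : Type*} [Lattice A] {f : A → A}

/- An anti-endomorphism is a lattice homomorphism `A → Aᵒᵈ`. -/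
theorem map_finset_sup'_s2 (hf : IsLatAntiEndo f) {s : Finset ι} (hs : s.Nonempty) (x : ι → A) :
    f (s.sup' hs x) = s.inf' hs (f ∘ x) :=
  Finset.apply_sup'_eq_sup'_comp (γ := Aᵒᵈ) hs (OrderDual.toDual ∘ f)
    fun a b => congrArg OrderDual.toDual (hf a b).1

theorem map_finset_inf'_s2 (hf : IsLatAntiEndo f) {s : Finset ι} (hs : s.Nonempty) (x : ι → A) :
    f (s.inf' hs x) = s.sup' hs (f ∘ x) :=
  Finset.apply_inf'_eq_inf'_comp (γ := Aᵒᵈ) hs (OrderDual.toDual ∘ f)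
    fun a b => congrArg OrderDual.toDual (hf a b).2

end IsLatAntiEndo

namespace Finset

variable {α ι : Type*}

theorem univ_sup'_comp_perm [Fintype ι] [SemilatticeSup α] (h : (univ : Finset ι).Nonempty)
    (σ : Equiv.Perm ι) (x : ι → α) : univ.sup' h (x ∘ σ) = univ.sup' h x :=
  (sup'_comp_eq_map x h (f := σ.toEmbedding)).trans
    (sup'_congr _ (map_univ_equiv σ) fun _ _ => rfl)

theorem univ_inf'_comp_perm [Fintype ι] [SemilatticeInf α] (h : (univ : Finset ι).Nonempty)
    (σ : Equiv.Perm ι) (x : ι → α) : univ.inf' h (x ∘ σ) = univ.inf' h x :=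
  univ_sup'_comp_perm (α := αᵒᵈ) h σ x

theorem apply_eq_apply_of_sup'_eq_inf' [Lattice α] {s : Finset ι} {hs : s.Nonempty} {x : ι → α}
    (h : s.sup' hs x = s.inf' hs x) {i j : ι} (hi : i ∈ s) (hj : j ∈ s) : x i = x j :=
  le_antisymm ((le_sup' x hi).trans (h ▸ inf'_le x hj))
    ((le_sup' x hj).trans (h ▸ inf'_le x hi))

end Finset

theorem finRotate_apply_eq_mk {n : ℕ} (i : Fin n) :
    finRotate n i = ⟨((i : ℕ) + 1) % n, Nat.mod_lt _ i.pos⟩ := by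
  have := i.neZero
  ext
  simp [finRotate_apply, Fin.val_add]

/-- If `f` is a lattice anti-endomorphism and `x₁,…,xₙ` (`n ≥ 2`)
is a proper cycle of `f`, then `p = x₁ ⊔ ⋯ ⊔ xₙ` and `q = x₁ ⊓ ⋯ ⊓ xₙ` satisfy
`p ≠ q`, `f p = q` and `f q = p`, i.e. they form a cycle of length 2. -/
theorem sup_inf_of_proper_cycle {A : Type*} [Lattice A] (f : A → A)
    (hf : IsLatAntiEndo f) (n : ℕ) (hn : 2 ≤ n) (x : Fin n → A)
    (hinj : Function.Injective x)
    (hcyc : ∀ i : Fin n, f (x i) = x ⟨((i : ℕ) + 1) % n, Nat.mod_lt _ i.pos⟩) :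
    ∃ p q : A,
      p = Finset.univ.sup' (Finset.univ_nonempty_iff.mpr ⟨⟨0, by omega⟩⟩) x ∧
      q = Finset.univ.inf' (Finset.univ_nonempty_iff.mpr ⟨⟨0, by omega⟩⟩) x ∧
      p ≠ q ∧ f p = q ∧ f q = p := by
  have hfx : f ∘ x = x ∘ finRotate n := funext fun i => by
    simp only [Function.comp_apply, hcyc, finRotate_apply_eq_mk]
  refine ⟨_, _, rfl, rfl, fun hpq => ?_, ?_, ?_⟩
  · have h01 := hinj (Finset.apply_eq_apply_of_sup'_eq_inf' hpq
      (Finset.mem_univ ⟨0, by omega⟩) (Finset.mem_univ ⟨1, by omega⟩))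
    simp [Fin.ext_iff] at h01
  · rw [hf.map_finset_sup'_s2, hfx, Finset.univ_inf'_comp_perm]
  · rw [hf.map_finset_inf'_s2, hfx, Finset.univ_sup'_comp_perm]
end

section
/- Any lattice anti-endomorphism f of a lattice (A, ⊔, ⊓) that has a proper cycle or has at least two fixed points must have a cycle of length 2. -/
/-!
If `f` has a proper cycle, its elements form a finite set `S` with at least two elements that `f`
permutes; two fixed points `u ≠ v` form such a set too. An anti-endomorphism turns the finite
infimum of `S` into the finite supremum of `f '' S = S`, and vice versa, so `f` swaps `⨅ S` and
`⨆ S`, which differ because `S` has two distinct elements.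
-/

theorem hasCycle_two_of_ne {A : Type*} {f : A → A} {a b : A} (hab : a ≠ b) (hfa : f a = b)
    (hfb : f b = a) : HasCycle f 2 := by
  refine ⟨![a, b], fun i j hij => ?_, fun i => ?_⟩
  · fin_cases i <;> fin_cases j <;> simp_all
  · fin_cases i <;> simpa

theorem HasCycle.exists_finset_image_eq {A : Type*} [DecidableEq A] {f : A → A} {n : ℕ}
    (h : HasCycle f n) : ∃ s : Finset A, s.card = n ∧ s.image f = s := by
  obtain ⟨x, hx, hfx⟩ := h
  have hrot : f ∘ x = x ∘ finRotate n := by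
    ext i
    have := i.neZero
    simp only [Function.comp_apply, hfx, finRotate_apply]
    congr 1
    ext
    simp [Fin.val_add]
  refine ⟨Finset.univ.image x, by simp [Finset.card_image_of_injective _ hx], ?_⟩
  rw [Finset.image_image, hrot, ← Finset.image_image, Finset.image_univ_equiv]

theorem Finset.inf'_id_ne_sup'_id_of_one_lt_card {A : Type*} [Lattice A] {s : Finset A}
    (hne : s.Nonempty) (hs : 1 < s.card) : s.inf' hne id ≠ s.sup' hne id := by
  obtain ⟨a, ha, b, hb, hab⟩ := Finset.one_lt_card.mp hs
  intro h
  refine hab (le_antisymm ?_ ?_)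
  · exact (s.le_sup' id ha).trans (h ▸ s.inf'_le id hb)
  · exact (s.le_sup' id hb).trans (h ▸ s.inf'_le id ha)

namespace IsLatAntiEndo

variable {A : Type*} [Lattice A] {f : A → A}

theorem map_sup' (hf : IsLatAntiEndo f) {ι : Type*} {s : Finset ι} (hs : s.Nonempty)
    (g : ι → A) : f (s.sup' hs g) = s.inf' hs (f ∘ g) :=
  Finset.apply_sup'_eq_sup'_comp (γ := Aᵒᵈ) hs (OrderDual.toDual ∘ f) fun x y => (hf x y).1

theorem map_inf' (hf : IsLatAntiEndo f) {ι : Type*} {s : Finset ι} (hs : s.Nonempty)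
    (g : ι → A) : f (s.inf' hs g) = s.sup' hs (f ∘ g) :=
  Finset.apply_inf'_eq_inf'_comp (γ := Aᵒᵈ) hs (OrderDual.toDual ∘ f) fun x y => (hf x y).2

variable [DecidableEq A] {s : Finset A}

theorem map_inf'_id_of_image_eq (hf : IsLatAntiEndo f) (hs : s.Nonempty) (hfs : s.image f = s) :
    f (s.inf' hs id) = s.sup' hs id :=
  calc f (s.inf' hs id) = s.sup' hs (id ∘ f) := hf.map_inf' hs id
    _ = (s.image f).sup' (hs.image f) id := (Finset.sup'_image _ _).symm
    _ = s.sup' hs id := Finset.sup'_congr _ hfs fun _ _ => rfl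

theorem map_sup'_id_of_image_eq (hf : IsLatAntiEndo f) (hs : s.Nonempty) (hfs : s.image f = s) :
    f (s.sup' hs id) = s.inf' hs id :=
  calc f (s.sup' hs id) = s.inf' hs (id ∘ f) := hf.map_sup' hs id
    _ = (s.image f).inf' (hs.image f) id := (Finset.inf'_image _ _).symm
    _ = s.inf' hs id := Finset.inf'_congr _ hfs fun _ _ => rfl

theorem hasCycle_two_of_image_eq (hf : IsLatAntiEndo f) (hs : 1 < s.card)
    (hfs : s.image f = s) : HasCycle f 2 :=
  have hne : s.Nonempty := Finset.card_pos.mp (by omega)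
  hasCycle_two_of_ne (s.inf'_id_ne_sup'_id_of_one_lt_card hne hs)
    (hf.map_inf'_id_of_image_eq hne hfs) (hf.map_sup'_id_of_image_eq hne hfs)

end IsLatAntiEndo

/-- A lattice anti-endomorphism with a proper cycle or at least
two fixed points has a cycle of length 2. -/
theorem hasCycle_two_of_antiEndo {A : Type*} [Lattice A] (f : A → A)
    (hf : IsLatAntiEndo f)
    (h : (∃ n : ℕ, 2 ≤ n ∧ HasCycle f n) ∨ ∃ u v : A, u ≠ v ∧ f u = u ∧ f v = v) :
    HasCycle f 2 := by
  classical
  obtain ⟨s, hs, hfs⟩ : ∃ s : Finset A, 1 < s.card ∧ s.image f = s := by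
    rcases h with ⟨n, hn, hcyc⟩ | ⟨u, v, huv, hu, hv⟩
    · obtain ⟨s, rfl, hfs⟩ := hcyc.exists_finset_image_eq
      exact ⟨s, hn, hfs⟩
    · exact ⟨{u, v}, by simp [Finset.card_pair huv], by simp [hu, hv]⟩
  exact hf.hasCycle_two_of_image_eq hs hfs
end

section
/- Let f : A → A and x, y ∈ A. The following conditions are equivalent: (1) (x, y) ∈ β; (2) (f(x), f(y)) ∈ β; (3) n_f(x) is finite with 3 ≤ n_f(x), x ∼_{f²} y, and f^t(x) ≠ f^t(y) for all integers t ≥ 0. -/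
/-- `x ∼_f y` iff `f^k(x) = f^l(y)` for some `k, l ≥ 0`. -/
def fRel {A : Type*} (f : A → A) (x y : A) : Prop :=
  ∃ k l : ℕ, f^[k] x = f^[l] y

open Classical in
/-- The period `n_f(x)`: the common period of the cyclic elements in the
`f`-component of `x` if the `f`-orbit of `x` is finite, and `∞` otherwise. -/
noncomputable def nf {A : Type*} (f : A → A) (x : A) : ℕ∞ :=
  if (∃ m : ℕ, 1 ≤ m ∧ ∃ k : ℕ, f^[m + k] x = f^[k] x)
  then ((sInf {m : ℕ | 1 ≤ m ∧ ∃ k : ℕ, f^[m + k] x = f^[k] x} : ℕ) : ℕ∞)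
  else ⊤

/-- The set `β` of pairs `(x,y)` with
`f^{2k+m}(x) = f^m(y) ≠ f^m(x) = f^{2l+m}(y)` for some `k, l, m ≥ 0`. -/
def betaSet {A : Type*} (f : A → A) : Set (A × A) :=
  {p | ∃ k l m : ℕ, f^[2 * k + m] p.1 = f^[m] p.2 ∧ f^[m] p.2 ≠ f^[m] p.1 ∧
    f^[m] p.1 = f^[2 * l + m] p.2}

private lemma iterStep {A : Type*} (f : A → A) (x : A) {p s : ℕ}
    (h : f^[p + s] x = f^[s] x) : ∀ j, s ≤ j → f^[p + j] x = f^[j] x := by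
  intro j hj
  have h2 := congrArg (f^[j - s]) h
  rw [← Function.iterate_add_apply, ← Function.iterate_add_apply] at h2
  have e1 : j - s + (p + s) = p + j := by omega
  have e2 : j - s + s = j := by omega
  rwa [e1, e2] at h2

private lemma iterMul {A : Type*} (f : A → A) (x : A) {p s : ℕ}
    (h : ∀ j, s ≤ j → f^[p + j] x = f^[j] x) :
    ∀ i j, s ≤ j → f^[i * p + j] x = f^[j] x := by
  intro i
  induction i with
  | zero => intro j hj; simp
  | succ i ih =>
    intro j hj
    have e : (i + 1) * p + j = p + (i * p + j) := by ring
    rw [e, h (i * p + j) (by omega), ih j hj]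

private lemma compIter {A : Type*} (f : A → A) (a : ℕ) (z : A) :
    (f ∘ f)^[a] z = f^[2 * a] z := by
  induction a with
  | zero => simp
  | succ a ih =>
    rw [Function.iterate_succ_apply', ih, Function.comp_apply,
      show 2 * (a + 1) = (2 * a + 1) + 1 by ring,
      Function.iterate_succ_apply', Function.iterate_succ_apply']

/-- β implies all iterates distinct. -/
private lemma beta_dist {A : Type*} (f : A → A) (x y : A)
    (hβ : (x, y) ∈ betaSet f) : ∀ t : ℕ, f^[t] x ≠ f^[t] y := by
  obtain ⟨k, l, m, h1, h2, h3⟩ := hβ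
  simp only at h1 h2 h3
  -- k ≥ 1
  have hk1 : 1 ≤ k := by
    rcases Nat.eq_zero_or_pos k with hk | hk
    · exfalso; apply h2; rw [hk] at h1; simpa using h1.symm
    · exact hk
  -- x eventually periodic with period 2k+2l from m
  have hP : f^[(2 * k + 2 * l) + m] x = f^[m] x := by
    have h4 := congrArg (f^[2 * l]) h1
    rw [← Function.iterate_add_apply, ← Function.iterate_add_apply] at h4
    have e : 2 * l + (2 * k + m) = 2 * k + 2 * l + m := by omega
    rw [e] at h4
    have e2 : 2 * l + m = 2 * l + m := rfl
    exact h4.trans h3.symm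
  have hPfam := iterStep f x hP
  -- shift relation
  have hshift : ∀ j, m ≤ j → f^[2 * k + j] x = f^[j] y := by
    intro j hj
    have h4 := congrArg (f^[j - m]) h1
    rw [← Function.iterate_add_apply, ← Function.iterate_add_apply] at h4
    have e1 : j - m + (2 * k + m) = 2 * k + j := by omega
    have e2 : j - m + m = j := by omega
    rwa [e1, e2] at h4
  intro t ht
  by_cases htm : t ≤ m
  · apply h2
    have h4 := congrArg (f^[m - t]) ht
    rw [← Function.iterate_add_apply, ← Function.iterate_add_apply] at h4
    have e : m - t + t = m := by omega
    rw [e] at h4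
    exact h4.symm
  · push_neg at htm
    have htm' : m ≤ t := le_of_lt htm
    have hxt : f^[2 * k + t] x = f^[t] x := (hshift t htm').trans ht.symm
    have hxtfam := iterStep f x hxt
    -- J := t * (2k+2l) + m
    have htQ : t ≤ t * (2 * k + 2 * l) := by
      calc t = t * 1 := (mul_one t).symm
        _ ≤ t * (2 * k + 2 * l) := Nat.mul_le_mul_left t (by omega)
    set Q := t * (2 * k + 2 * l) with hQ
    have hJm : f^[Q + m] x = f^[m] x := iterMul f x hPfam t m (le_refl m)
    have h2kJ : f^[2 * k + (Q + m)] x = f^[Q + m] x :=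
      hxtfam (Q + m) (by omega)
    have h2km : f^[Q + (2 * k + m)] x = f^[2 * k + m] x :=
      iterMul f x hPfam t (2 * k + m) (by omega)
    have e : 2 * k + (Q + m) = Q + (2 * k + m) := by omega
    rw [e] at h2kJ
    have : f^[2 * k + m] x = f^[m] x := h2km.symm.trans (h2kJ.trans hJm)
    exact h2 (h1.symm.trans this)

private lemma beta_char {A : Type*} (f : A → A) (x y : A) :
    (x, y) ∈ betaSet f ↔
      (3 ≤ nf f x ∧ nf f x ≠ ⊤ ∧ fRel (f ∘ f) x y ∧
        ∀ t : ℕ, f^[t] x ≠ f^[t] y) := by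
  constructor
  · intro hβ
    have hdist := beta_dist f x y hβ
    obtain ⟨k, l, m, h1, h2, h3⟩ := hβ
    simp only at h1 h2 h3
    have hk1 : 1 ≤ k := by
      rcases Nat.eq_zero_or_pos k with hk | hk
      · exfalso; apply h2; rw [hk] at h1; simpa using h1.symm
      · exact hk
    have hP : f^[(2 * k + 2 * l) + m] x = f^[m] x := by
      have h4 := congrArg (f^[2 * l]) h1
      rw [← Function.iterate_add_apply, ← Function.iterate_add_apply] at h4
      have e : 2 * l + (2 * k + m) = 2 * k + 2 * l + m := by omega
      rw [e] at h4
      exact h4.trans h3.symm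
    have hshift : ∀ j, m ≤ j → f^[2 * k + j] x = f^[j] y := by
      intro j hj
      have h4 := congrArg (f^[j - m]) h1
      rw [← Function.iterate_add_apply, ← Function.iterate_add_apply] at h4
      have e1 : j - m + (2 * k + m) = 2 * k + j := by omega
      have e2 : j - m + m = j := by omega
      rwa [e1, e2] at h4
    -- the condition in nf holds
    have hC : ∃ m' : ℕ, 1 ≤ m' ∧ ∃ k' : ℕ, f^[m' + k'] x = f^[k'] x :=
      ⟨2 * k + 2 * l, by omega, m, hP⟩
    have hnf : nf f x = ((sInf {m' : ℕ | 1 ≤ m' ∧ ∃ k' : ℕ, f^[m' + k'] x = f^[k'] x} : ℕ) : ℕ∞) := by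
      simp only [nf]; rw [if_pos hC]
    refine ⟨?_, ?_, ?_, hdist⟩
    · -- 3 ≤ nf
      rw [hnf]
      have hmem := Nat.sInf_mem (⟨2 * k + 2 * l, by omega, m, hP⟩ :
        {m' : ℕ | 1 ≤ m' ∧ ∃ k' : ℕ, f^[m' + k'] x = f^[k'] x}.Nonempty)
      obtain ⟨hn1, k0, hn0per⟩ := hmem
      set n0 := sInf {m' : ℕ | 1 ≤ m' ∧ ∃ k' : ℕ, f^[m' + k'] x = f^[k'] x} with hn0
      have h3n : 3 ≤ n0 := by
        by_contra hlt
        push_neg at hlt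
        have h2per : ∀ j, k0 ≤ j → f^[2 + j] x = f^[j] x := by
          have hn12 : n0 = 1 ∨ n0 = 2 := by omega
          rcases hn12 with h | h
          · rw [h] at hn0per
            intro j hj
            have := iterMul f x (iterStep f x hn0per) 2 j hj
            rwa [show 2 * 1 + j = 2 + j by omega] at this
          · rw [h] at hn0per
            exact iterStep f x hn0per
        have hj : f^[2 * k + (m + k0)] x = f^[m + k0] x := by
          have := iterMul f x h2per k (m + k0) (by omega)
          rwa [show k * 2 + (m + k0) = 2 * k + (m + k0) by omega] at this
        have := (hshift (m + k0) (by omega)).symm.trans hj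
        exact hdist (m + k0) this.symm
      exact_mod_cast h3n
    · rw [hnf]; exact ENat.coe_ne_top _
    · -- fRel (f ∘ f) x y
      refine ⟨k + m, m, ?_⟩
      rw [compIter, compIter]
      have h4 := congrArg (f^[m]) h1
      rw [← Function.iterate_add_apply, ← Function.iterate_add_apply] at h4
      have e1 : m + (2 * k + m) = 2 * (k + m) := by omega
      have e2 : m + m = 2 * m := by omega
      rwa [e1, e2] at h4
  · rintro ⟨-, hne, ⟨a, b, hab⟩, hdist⟩
    rw [compIter, compIter] at hab
    -- extract eventual periodicity of x
    have hC : ∃ m : ℕ, 1 ≤ m ∧ ∃ k : ℕ, f^[m + k] x = f^[k] x := by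
      by_contra hC
      apply hne
      simp only [nf]; rw [if_neg hC]
    obtain ⟨n, hn1, k0, hper⟩ := hC
    obtain ⟨n', rfl⟩ : ∃ n', n = n' + 1 := ⟨n - 1, by omega⟩
    have hxfam := iterStep f x hper
    have hxy : ∀ j, f^[2 * a + j] x = f^[2 * b + j] y := by
      intro j
      have h4 := congrArg (f^[j]) hab
      rw [← Function.iterate_add_apply, ← Function.iterate_add_apply] at h4
      rwa [Nat.add_comm j (2 * a), Nat.add_comm j (2 * b)] at h4
    -- eventual periodicity of y with the same period
    have hyfam : ∀ j, 2 * b + k0 ≤ j → f^[(n' + 1) + j] y = f^[j] y := by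
      intro j hj
      have e1 : f^[j] y = f^[2 * a + (j - 2 * b)] x := by
        have := hxy (j - 2 * b)
        rw [show 2 * b + (j - 2 * b) = j by omega] at this
        exact this.symm
      have e2 : f^[(n' + 1) + j] y = f^[2 * a + ((n' + 1) + j - 2 * b)] x := by
        have := hxy ((n' + 1) + j - 2 * b)
        rw [show 2 * b + ((n' + 1) + j - 2 * b) = (n' + 1) + j by omega] at this
        exact this.symm
      have e3 : f^[2 * a + ((n' + 1) + j - 2 * b)] x = f^[2 * a + (j - 2 * b)] x := by
        have := hxfam (2 * a + (j - 2 * b)) (by omega)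
        rwa [show (n' + 1) + (2 * a + (j - 2 * b)) = 2 * a + ((n' + 1) + j - 2 * b) by omega] at this
      rw [e2, e3, ← e1]
    set m := 2 * a + 2 * b + k0 with hm
    refine ⟨a + b * n', b + a * n', m, ?_, (hdist m).symm, ?_⟩
    · -- f^[2(a+bn') + m] x = f^[m] y
      have c1 : f^[m] y = f^[4 * a + k0] x := by
        have := hxy (2 * a + k0)
        rw [show 2 * a + (2 * a + k0) = 4 * a + k0 by omega,
          show 2 * b + (2 * a + k0) = m by omega] at this
        exact this.symm
      have c2 : f^[(2 * b) * (n' + 1) + (4 * a + k0)] x = f^[4 * a + k0] x :=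
        iterMul f x hxfam (2 * b) (4 * a + k0) (by omega)
      have e : 2 * (a + b * n') + m = (2 * b) * (n' + 1) + (4 * a + k0) := by
        rw [hm]; ring
      rw [e, c2, ← c1]
    · -- f^[m] x = f^[2(b+an') + m] y
      have d1 : f^[m] x = f^[4 * b + k0] y := by
        have := hxy (2 * b + k0)
        rwa [show 2 * a + (2 * b + k0) = m by omega,
          show 2 * b + (2 * b + k0) = 4 * b + k0 by omega] at this
      have d2 : f^[(2 * a) * (n' + 1) + (4 * b + k0)] y = f^[4 * b + k0] y :=
        iterMul f y hyfam (2 * a) (4 * b + k0) (by omega)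
      have e : 2 * (b + a * n') + m = (2 * a) * (n' + 1) + (4 * b + k0) := by
        rw [hm]; ring
      rw [e, d2, ← d1]


/-- **Lemma 3.1.** `(x,y) ∈ β` iff `(f x, f y) ∈ β` iff
`3 ≤ n_f(x) ≠ ∞`, `x ∼_{f²} y` and `f^t(x) ≠ f^t(y)` for all `t ≥ 0`. -/
theorem mem_betaSet_iff {A : Type*} (f : A → A) (x y : A) :
    ((x, y) ∈ betaSet f ↔ (f x, f y) ∈ betaSet f) ∧
    ((x, y) ∈ betaSet f ↔
      (3 ≤ nf f x ∧ nf f x ≠ ⊤ ∧ fRel (f ∘ f) x y ∧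
        ∀ t : ℕ, f^[t] x ≠ f^[t] y)) := by
  refine ⟨⟨?_, ?_⟩, beta_char f x y⟩
  · intro hβ
    have hdist := beta_dist f x y hβ
    obtain ⟨k, l, m, h1, h2, h3⟩ := hβ
    simp only at h1 h2 h3
    refine ⟨k, l, m, ?_, ?_, ?_⟩
    · show f^[2 * k + m] (f x) = f^[m] (f y)
      rw [← Function.iterate_succ_apply, ← Function.iterate_succ_apply,
        Function.iterate_succ_apply', Function.iterate_succ_apply', h1]
    · show f^[m] (f y) ≠ f^[m] (f x)
      rw [← Function.iterate_succ_apply, ← Function.iterate_succ_apply]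
      exact (hdist (m + 1)).symm
    · show f^[m] (f x) = f^[2 * l + m] (f y)
      rw [← Function.iterate_succ_apply, ← Function.iterate_succ_apply,
        Function.iterate_succ_apply', Function.iterate_succ_apply', h3]
  · rintro ⟨k, l, m, h1, h2, h3⟩
    simp only at h1 h2 h3
    rw [← Function.iterate_succ_apply, ← Function.iterate_succ_apply] at h1 h2 h3
    refine ⟨k, l, m + 1, ?_, h2, ?_⟩
    · show f^[2 * k + (m + 1)] x = f^[m + 1] y
      rwa [show 2 * k + (m + 1) = (2 * k + m) + 1 by omega]
    · show f^[m + 1] x = f^[2 * l + (m + 1)] y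
      rwa [show 2 * l + (m + 1) = (2 * l + m) + 1 by omega]
end

section
/- Let f : A → A and a ∈ A. The relation ([a]_{f²} × [a]_{f²}) \ β is an equivalence relation on the set [a]_{f²}. -/
private lemma itc {A : Type*} (f : A → A) {a b : ℕ} (u : A) (h : a = b) :
    f^[a] u = f^[b] u := by rw [h]

private lemma iter_fixed_mul {A : Type*} (f : A → A) (w : A) (N s : ℕ)
    (h : f^[N] w = w) : f^[N * s] w = w := by
  rw [Function.iterate_mul]
  exact Function.iterate_fixed h s

/-- If `w` is periodic with period `n + 1` and `f^[2k]` fixes `f^[s] w`,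
then `f^[2k]` fixes `w`. -/
private lemma cancel_even {A : Type*} (f : A → A) (w : A) (n s k : ℕ)
    (hfix : f^[n + 1] w = w) (h : f^[2 * k + s] w = f^[s] w) :
    f^[2 * k] w = w := by
  have h1 : f^[(n + 1) * s] w = w := iter_fixed_mul f w (n + 1) s hfix
  have h2 := congrArg (f^[n * s]) h
  rw [← Function.iterate_add_apply, ← Function.iterate_add_apply] at h2
  have e1 : n * s + (2 * k + s) = 2 * k + (n + 1) * s := by ring
  have e2 : n * s + s = (n + 1) * s := by ring
  rw [e1, e2, h1, Function.iterate_add_apply, h1] at h2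
  exact h2

private lemma two_iter {A : Type*} (f : A → A) (n : ℕ) (x : A) :
    (f ∘ f)^[n] x = f^[2 * n] x := by
  rw [Function.iterate_mul]
  rfl

/-- **Corollary 3.2, first part.** The relation
`([a]_{f²} × [a]_{f²}) \ β` is an equivalence relation on the `f²`-component
`[a]_{f²}` of `a`. -/
theorem betaSet_compl_equivalence {A : Type*} (f : A → A) (a : A) :
    Equivalence (fun x y : {z : A // fRel (f ∘ f) a z} =>
      ((x : A), (y : A)) ∉ betaSet f) := by
  constructor
  · rintro x ⟨k, l, m, h1, hne, h2⟩
    exact hne rfl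
  · rintro x y h ⟨k, l, m, h1, hne, h2⟩
    exact h ⟨l, k, m, h2.symm, hne.symm, h1.symm⟩
  · rintro x y z hxy hyz ⟨k, l, m, h1, hne, h2⟩
    dsimp only at h1 hne h2
    -- h1 : f^[2k+m] x = f^[m] z, hne : f^[m] z ≠ f^[m] x, h2 : f^[m] x = f^[2l+m] z
    -- First get p, q with f^[2p] y = f^[2q] x.
    obtain ⟨k1, l1, hx⟩ := x.2
    obtain ⟨k2, l2, hy⟩ := y.2
    have hpq : f^[2 * (k1 + l2)] (y : A) = f^[2 * (k2 + l1)] (x : A) := by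
      have e1 := congrArg ((f ∘ f)^[k2]) hx
      have e2 := congrArg ((f ∘ f)^[k1]) hy
      rw [← Function.iterate_add_apply, ← Function.iterate_add_apply] at e1 e2
      rw [← two_iter, ← two_iter, ← e2, ← e1, Nat.add_comm]
    set p := k1 + l2 with hp
    set q := k2 + l1 with hq
    -- k + l ≥ 1 since otherwise h1 contradicts hne directly.
    have hkl : 1 ≤ k + l := by
      rcases Nat.eq_zero_or_pos (k + l) with h0 | h0
      · have hk : k = 0 := by omega
        subst hk
        rw [show 2 * 0 + m = m by omega] at h1
        exact absurd h1.symm hne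
      · exact h0
    obtain ⟨n, hn⟩ : ∃ n, 2 * (k + l) = n + 1 := ⟨2 * (k + l) - 1, by omega⟩
    -- w := f^[m] x is periodic with period n + 1.
    have hfix : f^[n + 1] (f^[m] (x : A)) = f^[m] (x : A) := by
      calc f^[n + 1] (f^[m] (x : A)) = f^[(n + 1) + m] (x : A) :=
            (Function.iterate_add_apply f (n + 1) m _).symm
        _ = f^[2 * l + (2 * k + m)] (x : A) := itc f _ (by omega)
        _ = f^[2 * l] (f^[2 * k + m] (x : A)) := Function.iterate_add_apply f _ _ _
        _ = f^[2 * l] (f^[m] (z : A)) := by rw [h1]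
        _ = f^[2 * l + m] (z : A) := (Function.iterate_add_apply f _ _ _).symm
        _ = f^[m] (x : A) := h2.symm
    have hyx : f^[m + 2 * p] (y : A) = f^[m + 2 * q] (x : A) := by
      have := congrArg (f^[m]) hpq
      rw [← Function.iterate_add_apply, ← Function.iterate_add_apply] at this
      exact this
    have hzx : f^[m + 2 * p] (z : A) = f^[(2 * k + 2 * p) + m] (x : A) := by
      calc f^[m + 2 * p] (z : A) = f^[2 * p + m] (z : A) := itc f _ (by omega)
        _ = f^[2 * p] (f^[m] (z : A)) := Function.iterate_add_apply f _ _ _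
        _ = f^[2 * p] (f^[2 * k + m] (x : A)) := by rw [h1]
        _ = f^[2 * p + (2 * k + m)] (x : A) := (Function.iterate_add_apply f _ _ _).symm
        _ = f^[(2 * k + 2 * p) + m] (x : A) := itc f _ (by omega)
    by_cases hxy0 : f^[m + 2 * p] (x : A) = f^[m + 2 * p] (y : A)
    · -- then (y, z) ∈ β, contradiction with hyz
      refine hyz ⟨k, l, m + 2 * p, ?_, ?_, ?_⟩ <;> dsimp only
      · calc f^[2 * k + (m + 2 * p)] (y : A)
              = f^[2 * k] (f^[m + 2 * p] (y : A)) := Function.iterate_add_apply f _ _ _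
          _ = f^[2 * k] (f^[m + 2 * p] (x : A)) := by rw [hxy0]
          _ = f^[2 * k + (m + 2 * p)] (x : A) := (Function.iterate_add_apply f _ _ _).symm
          _ = f^[2 * p + (2 * k + m)] (x : A) := itc f _ (by omega)
          _ = f^[2 * p] (f^[2 * k + m] (x : A)) := Function.iterate_add_apply f _ _ _
          _ = f^[2 * p] (f^[m] (z : A)) := by rw [h1]
          _ = f^[2 * p + m] (z : A) := (Function.iterate_add_apply f _ _ _).symm
          _ = f^[m + 2 * p] (z : A) := itc f _ (by omega)
      · intro he
        have he' : f^[2 * k + 2 * p] (f^[m] (x : A)) = f^[2 * p] (f^[m] (x : A)) := by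
          calc f^[2 * k + 2 * p] (f^[m] (x : A))
                = f^[(2 * k + 2 * p) + m] (x : A) := (Function.iterate_add_apply f _ _ _).symm
            _ = f^[m + 2 * p] (z : A) := hzx.symm
            _ = f^[m + 2 * p] (y : A) := he
            _ = f^[m + 2 * p] (x : A) := hxy0.symm
            _ = f^[2 * p + m] (x : A) := itc f _ (by omega)
            _ = f^[2 * p] (f^[m] (x : A)) := Function.iterate_add_apply f _ _ _
        have h2k := cancel_even f (f^[m] (x : A)) n (2 * p) k hfix he'
        apply hne
        calc f^[m] (z : A) = f^[2 * k + m] (x : A) := h1.symm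
          _ = f^[2 * k] (f^[m] (x : A)) := Function.iterate_add_apply f _ _ _
          _ = f^[m] (x : A) := h2k
      · calc f^[m + 2 * p] (y : A) = f^[m + 2 * p] (x : A) := hxy0.symm
          _ = f^[2 * p + m] (x : A) := itc f _ (by omega)
          _ = f^[2 * p] (f^[m] (x : A)) := Function.iterate_add_apply f _ _ _
          _ = f^[2 * p] (f^[n + 1] (f^[m] (x : A))) := by rw [hfix]
          _ = f^[2 * p + ((n + 1) + m)] (x : A) := by
              rw [← Function.iterate_add_apply, ← Function.iterate_add_apply]
              exact itc f _ (by ring)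
          _ = f^[2 * l + ((2 * k + 2 * p) + m)] (x : A) := itc f _ (by omega)
          _ = f^[2 * l] (f^[(2 * k + 2 * p) + m] (x : A)) := Function.iterate_add_apply f _ _ _
          _ = f^[2 * l] (f^[m + 2 * p] (z : A)) := by rw [hzx]
          _ = f^[2 * l + (m + 2 * p)] (z : A) := (Function.iterate_add_apply f _ _ _).symm
    · -- then (x, y) ∈ β, contradiction with hxy
      refine hxy ⟨q + p * n, p + q * n, m + 2 * p, ?_, fun he => hxy0 he.symm, ?_⟩ <;>
        dsimp only
      · calc f^[2 * (q + p * n) + (m + 2 * p)] (x : A)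
              = f^[2 * q + ((n + 1) * (2 * p) + m)] (x : A) := itc f _ (by ring)
          _ = f^[2 * q] (f^[(n + 1) * (2 * p)] (f^[m] (x : A))) := by
              rw [← Function.iterate_add_apply, ← Function.iterate_add_apply]
              exact itc f _ (by ring)
          _ = f^[2 * q] (f^[m] (x : A)) := by
              rw [iter_fixed_mul f _ (n + 1) (2 * p) hfix]
          _ = f^[2 * q + m] (x : A) := (Function.iterate_add_apply f _ _ _).symm
          _ = f^[m + 2 * q] (x : A) := itc f _ (by omega)
          _ = f^[m + 2 * p] (y : A) := hyx.symm
      · calc f^[m + 2 * p] (x : A) = f^[2 * p + m] (x : A) := itc f _ (by omega)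
          _ = f^[2 * p] (f^[m] (x : A)) := Function.iterate_add_apply f _ _ _
          _ = f^[2 * p] (f^[(n + 1) * (2 * q)] (f^[m] (x : A))) := by
              rw [iter_fixed_mul f _ (n + 1) (2 * q) hfix]
          _ = f^[2 * p + ((n + 1) * (2 * q) + m)] (x : A) := by
              rw [← Function.iterate_add_apply, ← Function.iterate_add_apply]
              exact itc f _ (by ring)
          _ = f^[2 * (p + q * n) + (m + 2 * q)] (x : A) := itc f _ (by ring)
          _ = f^[2 * (p + q * n)] (f^[m + 2 * q] (x : A)) := Function.iterate_add_apply f _ _ _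
          _ = f^[2 * (p + q * n)] (f^[m + 2 * p] (y : A)) := by rw [hyx]
          _ = f^[2 * (p + q * n) + (m + 2 * p)] (y : A) := (Function.iterate_add_apply f _ _ _).symm
end

section
/- Let f : A → A and a ∈ A with n_f(a) finite and 3 ≤ n_f(a). Then the equivalence relation ([a]_{f²} × [a]_{f²}) \ β on [a]_{f²} has exactly n_{f²}(a) equivalence classes. -/
private lemma iterFix {A : Type*} {f : A → A} {p : ℕ} {z : A} (h : f^[p] z = z) :
    ∀ q : ℕ, f^[p * q] z = z := by
  intro q
  induction q with
  | zero => simp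
  | succ q ih => rw [Nat.mul_succ, Function.iterate_add_apply, h, ih]

open Classical in
/-- Auxiliary invariant: `iotaF f c n x = 2s - 2t` in `ZMod n` whenever
`f^[2t] x = f^[2s] c`. -/
noncomputable def iotaF {A : Type*} (f : A → A) (c : A) (n : ℕ) (x : A) : ZMod n :=
  if h : ∃ p : ℕ × ℕ, f^[2 * p.1] x = f^[2 * p.2] c then
    2 * (h.choose.2 : ZMod n) - 2 * (h.choose.1 : ZMod n) else 0

private lemma iotaF_spec {A : Type*} {f : A → A} {c : A} {n : ℕ}
    (hcyc : ∀ i j : ℕ, f^[i] c = f^[j] c ↔ (i : ZMod n) = (j : ZMod n))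
    {x : A} {t s : ℕ} (h : f^[2 * t] x = f^[2 * s] c) :
    iotaF f c n x = 2 * (s : ZMod n) - 2 * (t : ZMod n) := by
  have hex : ∃ p : ℕ × ℕ, f^[2 * p.1] x = f^[2 * p.2] c := ⟨(t, s), h⟩
  have key : ∀ t₀ s₀ : ℕ, f^[2 * t₀] x = f^[2 * s₀] c →
      2 * (s₀ : ZMod n) - 2 * (t₀ : ZMod n) = 2 * (s : ZMod n) - 2 * (t : ZMod n) := by
    intro t₀ s₀ hch
    have e1 : f^[2 * t + 2 * t₀] x = f^[2 * t + 2 * s₀] c := by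
      rw [Function.iterate_add_apply f (2 * t) (2 * t₀) x, hch,
        ← Function.iterate_add_apply]
    have e2 : f^[2 * t₀ + 2 * t] x = f^[2 * t₀ + 2 * s] c := by
      rw [Function.iterate_add_apply f (2 * t₀) (2 * t) x, h,
        ← Function.iterate_add_apply]
    rw [Nat.add_comm (2 * t₀) (2 * t)] at e2
    have e4 := (hcyc _ _).mp (e1.symm.trans e2)
    push_cast at e4
    linear_combination e4
  rw [iotaF, dif_pos hex]
  exact key _ _ hex.choose_spec

/-- **Corollary 3.2, second part.** If `3 ≤ n_f(a) ≠ ∞`, then the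
equivalence relation `([a]_{f²} × [a]_{f²}) \ β` on `[a]_{f²}` has exactly
`n_{f²}(a)` equivalence classes. -/
theorem card_classes_eq_period_sq {A : Type*} (f : A → A) (a : A)
    (h3 : 3 ≤ nf f a) (hfin : nf f a ≠ ⊤) :
    ∃ n : ℕ, nf (f ∘ f) a = (n : ℕ∞) ∧
      Nat.card {C : Set A // ∃ x, fRel (f ∘ f) a x ∧
        C = {y | fRel (f ∘ f) a y ∧ (x, y) ∉ betaSet f}} = n := by
  classical
  -- extract the period n
  have hP : ∃ m : ℕ, 1 ≤ m ∧ ∃ k : ℕ, f^[m + k] a = f^[k] a := by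
    by_contra h
    exact hfin (by rw [nf, if_neg h])
  obtain ⟨n, hn⟩ : ∃ n : ℕ, n = sInf {m : ℕ | 1 ≤ m ∧ ∃ k : ℕ, f^[m + k] a = f^[k] a} :=
    ⟨_, rfl⟩
  have hnf : nf f a = (n : ℕ∞) := by rw [nf, if_pos hP, ← hn]
  have hn3 : 3 ≤ n := by
    rw [hnf] at h3; exact_mod_cast h3
  have hmemS : n ∈ {m : ℕ | 1 ≤ m ∧ ∃ k : ℕ, f^[m + k] a = f^[k] a} := hn ▸ Nat.sInf_mem hP
  obtain ⟨hn1, k₀, hk₀⟩ := hmemS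
  have hminS : ∀ m : ℕ, 1 ≤ m → (∃ k : ℕ, f^[m + k] a = f^[k] a) → n ≤ m :=
    fun m h1 h2 => hn ▸ Nat.sInf_le ⟨h1, h2⟩
  haveI : NeZero n := ⟨by omega⟩
  obtain ⟨c, hcdef⟩ : ∃ c : A, c = f^[2 * k₀] a := ⟨_, rfl⟩
  have hshift : ∀ j : ℕ, f^[j] c = f^[j + 2 * k₀] a := by
    intro j
    rw [hcdef, ← Function.iterate_add_apply]
  have hc : f^[n] c = c := by
    rw [hshift, hcdef]
    have : n + 2 * k₀ = k₀ + (n + k₀) := by ring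
    rw [this, Function.iterate_add_apply, hk₀, ← Function.iterate_add_apply]
    congr 1; ring
  -- key cycle characterization
  have hcyc : ∀ i j : ℕ, f^[i] c = f^[j] c ↔ (i : ZMod n) = (j : ZMod n) := by
    have fwd : ∀ i j : ℕ, i ≤ j → f^[i] c = f^[j] c → (i : ZMod n) = (j : ZMod n) := by
      intro i j hij h
      have hje : j = i + (j - i) := by omega
      have h1 : f^[n * i] c = f^[n * i + (j - i)] c := by
        have h0 := congrArg (f^[i * (n - 1)]) h
        rw [← Function.iterate_add_apply f (i * (n - 1)) i,
          ← Function.iterate_add_apply f (i * (n - 1)) j] at h0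
        have e1 : i * (n - 1) + i = n * i := by
          have h' : (n - 1) + 1 = n := by omega
          calc i * (n - 1) + i = i * ((n - 1) + 1) := by ring
            _ = n * i := by rw [h']; ring
        have e2 : i * (n - 1) + j = n * i + (j - i) := by omega
        rw [e1, e2] at h0
        exact h0
      have hni : f^[n * i] c = c := iterFix hc i
      have h2 : f^[j - i] c = c := by
        rw [hni, show n * i + (j - i) = (j - i) + n * i by ring,
          Function.iterate_add_apply, hni] at h1
        exact h1.symm
      -- reduce mod n
      have h3' : f^[(j - i) % n] c = c := by
        have he : j - i = (j - i) % n + n * ((j - i) / n) := (Nat.mod_add_div (j - i) n).symm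
        rw [he, Function.iterate_add_apply, iterFix hc ((j - i) / n)] at h2
        exact h2
      have hr0 : (j - i) % n = 0 := by
        by_contra hr
        have hrS : n ≤ (j - i) % n := by
          apply hminS _ (Nat.one_le_iff_ne_zero.mpr hr)
          exact ⟨2 * k₀, by rw [← hshift ((j - i) % n), h3', hcdef]⟩
        have := Nat.mod_lt (j - i) (show 0 < n by omega)
        omega
      have : n ∣ j - i := Nat.dvd_of_mod_eq_zero hr0
      rw [ZMod.natCast_eq_natCast_iff]
      exact ((Nat.modEq_iff_dvd' hij).mpr this).symm.symm
    intro i j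
    constructor
    · intro h
      rcases le_total i j with hij | hij
      · exact fwd i j hij h
      · exact (fwd j i hij h.symm).symm
    · intro h
      rw [ZMod.natCast_eq_natCast_iff] at h
      rcases le_total i j with hij | hij
      · obtain ⟨q, hq⟩ := (Nat.modEq_iff_dvd' hij).mp h
        have hj : j = i + n * q := by omega
        rw [hj, Function.iterate_add_apply, iterFix hc q]
      · obtain ⟨q, hq⟩ := (Nat.modEq_iff_dvd' hij).mp h.symm
        have hi : i = j + n * q := by omega
        rw [hi, Function.iterate_add_apply, iterFix hc q]
  -- iterate of f∘f
  have h2it : ∀ (k : ℕ) (x : A), (f ∘ f)^[k] x = f^[2 * k] x := by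
    intro k x
    rw [Function.iterate_mul]
    rfl
  -- membership in the f²-component of a
  have hX : ∀ x : A, fRel (f ∘ f) a x ↔ ∃ t s : ℕ, f^[2 * t] x = f^[2 * s] c := by
    intro x
    constructor
    · rintro ⟨k, l, hkl⟩
      rw [h2it, h2it] at hkl
      refine ⟨l + k₀, k, ?_⟩
      have e1 : 2 * (l + k₀) = 2 * k₀ + 2 * l := by ring
      rw [e1, Function.iterate_add_apply, ← hkl, ← Function.iterate_add_apply, hshift]
      congr 1; ring
    · rintro ⟨t, s, hts⟩
      refine ⟨s + k₀, t, ?_⟩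
      rw [h2it, h2it]
      have e1 : 2 * (s + k₀) = 2 * s + 2 * k₀ := by ring
      rw [e1, ← hshift, hts]
  -- the β-characterization
  have hBeta : ∀ x y : A, (∃ t s : ℕ, f^[2 * t] x = f^[2 * s] c) →
      (∃ t s : ℕ, f^[2 * t] y = f^[2 * s] c) →
      ((x, y) ∉ betaSet f ↔ iotaF f c n x = iotaF f c n y) := by
    rintro x y ⟨t, s, hx⟩ ⟨t', s', hy⟩
    rw [iotaF_spec hcyc hx, iotaF_spec hcyc hy]
    constructor
    · -- contrapositive: iota different → in β
      intro hnb
      by_contra hne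
      apply hnb
      obtain ⟨m, p, p', hm, hp, hp', hmx, hmy⟩ :
          ∃ m p p' : ℕ, m = 2 * t + 2 * t' ∧ p = 2 * s + 2 * t' ∧ p' = 2 * s' + 2 * t ∧
            f^[m] x = f^[p] c ∧ f^[m] y = f^[p'] c := by
        refine ⟨2 * t + 2 * t', 2 * s + 2 * t', 2 * s' + 2 * t, rfl, rfl, rfl, ?_, ?_⟩
        · rw [show 2 * t + 2 * t' = 2 * t' + 2 * t by ring,
            Function.iterate_add_apply, hx, ← Function.iterate_add_apply]
          congr 1; ring
        · rw [Function.iterate_add_apply, hy, ← Function.iterate_add_apply]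
          congr 1; ring
      have hpne : (p : ZMod n) ≠ (p' : ZMod n) := by
        intro h
        apply hne
        rw [hp, hp'] at h
        push_cast at h
        linear_combination h
      obtain ⟨k, hk⟩ : ∃ k : ℕ, (2 * (k : ZMod n)) = (p' : ZMod n) - (p : ZMod n) := by
        refine ⟨(((s' : ZMod n) + t) - ((s : ZMod n) + t')).val, ?_⟩
        have hv : (((((s' : ZMod n) + t) - ((s : ZMod n) + t')).val : ℕ) : ZMod n) =
            ((s' : ZMod n) + t) - ((s : ZMod n) + t') := by simp
        rw [hv, hp, hp']
        push_cast
        ring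
      obtain ⟨l, hl⟩ : ∃ l : ℕ, (2 * (l : ZMod n)) = (p : ZMod n) - (p' : ZMod n) := by
        refine ⟨(((s : ZMod n) + t') - ((s' : ZMod n) + t)).val, ?_⟩
        have hv : (((((s : ZMod n) + t') - ((s' : ZMod n) + t)).val : ℕ) : ZMod n) =
            ((s : ZMod n) + t') - ((s' : ZMod n) + t) := by simp
        rw [hv, hp, hp']
        push_cast
        ring
      refine ⟨k, l, m, ?_, ?_, ?_⟩
      · show f^[2 * k + m] x = f^[m] y
        rw [Function.iterate_add_apply, hmx, hmy, ← Function.iterate_add_apply]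
        apply (hcyc _ _).mpr
        push_cast
        linear_combination hk
      · show f^[m] y ≠ f^[m] x
        rw [hmx, hmy]
        intro h
        exact hpne (((hcyc _ _).mp h).symm)
      · show f^[m] x = f^[2 * l + m] y
        rw [hmx, Function.iterate_add_apply, hmy, ← Function.iterate_add_apply]
        apply (hcyc _ _).mpr
        push_cast
        linear_combination -hl
    · -- iota equal → not in β
      intro hiota
      rintro ⟨k, l, m, h1, hne, h2⟩
      simp only at h1 hne h2
      -- f^[m] x is periodic with period d = 2(k+l)
      have hkl1 : 1 ≤ k + l := by
        by_contra hkl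
        have hk0 : k = 0 := by omega
        have hl0 : l = 0 := by omega
        rw [hk0] at h1
        simp only [Nat.mul_zero, Nat.zero_add] at h1
        exact hne h1.symm
      obtain ⟨d, hd⟩ : ∃ d : ℕ, d = 2 * (k + l) := ⟨_, rfl⟩
      have hdx : f^[d] (f^[m] x) = f^[m] x := by
        have e : f^[d + m] x = f^[m] x := by
          calc f^[d + m] x = f^[2 * l] (f^[2 * k + m] x) := by
                rw [← Function.iterate_add_apply]; congr 1; omega
            _ = f^[2 * l + m] y := by rw [h1, ← Function.iterate_add_apply]
            _ = f^[m] x := h2.symm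
        rwa [Function.iterate_add_apply] at e
      have hdy : f^[d] (f^[m] y) = f^[m] y := by
        have e : f^[d + m] y = f^[m] y := by
          calc f^[d + m] y = f^[2 * k] (f^[2 * l + m] y) := by
                rw [← Function.iterate_add_apply]; congr 1; omega
            _ = f^[2 * k + m] x := by rw [← h2, ← Function.iterate_add_apply]
            _ = f^[m] y := h1
        rwa [Function.iterate_add_apply] at e
      -- place f^[m] x and f^[m] y on the cycle
      have hux : f^[m] x = f^[(d * t - 2 * t) + m + 2 * s] c := by
        have hge : 2 * t ≤ d * t := by nlinarith
        calc f^[m] x = f^[d * t] (f^[m] x) := (iterFix hdx t).symm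
          _ = f^[(d * t - 2 * t) + m + 2 * t] x := by
              rw [← Function.iterate_add_apply]; congr 1; omega
          _ = f^[(d * t - 2 * t) + m] (f^[2 * t] x) := by
              rw [← Function.iterate_add_apply]
          _ = f^[(d * t - 2 * t) + m + 2 * s] c := by
              rw [hx, ← Function.iterate_add_apply]
      have huy : f^[m] y = f^[(d * t' - 2 * t') + m + 2 * s'] c := by
        have hge : 2 * t' ≤ d * t' := by nlinarith
        calc f^[m] y = f^[d * t'] (f^[m] y) := (iterFix hdy t').symm
          _ = f^[(d * t' - 2 * t') + m + 2 * t'] y := by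
              rw [← Function.iterate_add_apply]; congr 1; omega
          _ = f^[(d * t' - 2 * t') + m] (f^[2 * t'] y) := by
              rw [← Function.iterate_add_apply]
          _ = f^[(d * t' - 2 * t') + m + 2 * s'] c := by
              rw [hy, ← Function.iterate_add_apply]
      obtain ⟨u, hu⟩ : ∃ u : ℕ, u = (d * t - 2 * t) + m + 2 * s := ⟨_, rfl⟩
      obtain ⟨u', hu'⟩ : ∃ u' : ℕ, u' = (d * t' - 2 * t') + m + 2 * s' := ⟨_, rfl⟩
      rw [← hu] at hux
      rw [← hu'] at huy
      -- cast facts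
      have hcu : (u : ZMod n) = (d : ZMod n) * t - 2 * t + m + 2 * s := by
        have hge : 2 * t ≤ d * t := by nlinarith
        have e : u + 2 * t = d * t + m + 2 * s := by omega
        have e2 := congrArg (Nat.cast : ℕ → ZMod n) e
        push_cast at e2
        linear_combination e2
      have hcu' : (u' : ZMod n) = (d : ZMod n) * t' - 2 * t' + m + 2 * s' := by
        have hge : 2 * t' ≤ d * t' := by nlinarith
        have e : u' + 2 * t' = d * t' + m + 2 * s' := by omega
        have e2 := congrArg (Nat.cast : ℕ → ZMod n) e
        push_cast at e2
        linear_combination e2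
      -- from h1 and h2, d ≡ 0 mod n
      have e1 : ((2 * k + u : ℕ) : ZMod n) = (u' : ZMod n) := by
        apply (hcyc _ _).mp
        calc f^[2 * k + u] c = f^[2 * k] (f^[u] c) := Function.iterate_add_apply f _ _ c
          _ = f^[2 * k] (f^[m] x) := by rw [hux]
          _ = f^[2 * k + m] x := (Function.iterate_add_apply f _ _ x).symm
          _ = f^[m] y := h1
          _ = f^[u'] c := huy
      have e2 : ((u : ℕ) : ZMod n) = ((2 * l + u' : ℕ) : ZMod n) := by
        apply (hcyc _ _).mp
        calc f^[u] c = f^[m] x := hux.symm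
          _ = f^[2 * l + m] y := h2
          _ = f^[2 * l] (f^[m] y) := Function.iterate_add_apply f _ _ y
          _ = f^[2 * l] (f^[u'] c) := by rw [huy]
          _ = f^[2 * l + u'] c := (Function.iterate_add_apply f _ _ c).symm
      push_cast at e1 e2
      have hd0 : (d : ZMod n) = 0 := by
        have e3 : (2 : ZMod n) * k + 2 * l = 0 := by linear_combination e1 - e2
        have e4 := congrArg (Nat.cast : ℕ → ZMod n) hd
        push_cast at e4
        rw [e4]
        linear_combination e3
      -- conclude f^[m] x = f^[m] y
      apply hne
      rw [hux, huy]
      apply ((hcyc _ _).mpr _).symm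
      rw [hcu, hcu', hd0]
      linear_combination hiota
  -- the period of f² : choose N with the right divisibility properties
  obtain ⟨N, hN1, hn2N, hNdvd⟩ : ∃ N : ℕ, 1 ≤ N ∧ n ∣ 2 * N ∧ ∀ m : ℕ, n ∣ 2 * m → N ∣ m := by
    rcases Nat.even_or_odd n with he | ho
    · obtain ⟨r, hr⟩ := he
      refine ⟨r, by omega, ⟨1, by omega⟩, ?_⟩
      rintro m ⟨q, hq⟩
      refine ⟨q, ?_⟩
      have h2 : 2 * m = 2 * (r * q) := by rw [hq, hr]; ring
      exact Nat.eq_of_mul_eq_mul_left (by norm_num) h2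
    · have hco : n.Coprime 2 := Nat.coprime_two_right.mpr ho
      exact ⟨n, by omega, ⟨2, by ring⟩, fun m hm => hco.dvd_of_dvd_mul_left hm⟩
  have hcycN : f^[2 * N] c = c := by
    obtain ⟨q, hq⟩ := hn2N
    rw [hq, iterFix hc q]
  -- N is the period of f² at a
  have hNmem : 1 ≤ N ∧ ∃ k : ℕ, (f ∘ f)^[N + k] a = (f ∘ f)^[k] a := by
    refine ⟨hN1, k₀, ?_⟩
    rw [h2it, h2it]
    calc f^[2 * (N + k₀)] a = f^[2 * N + 2 * k₀] a := by congr 1; ring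
      _ = f^[2 * N] c := (hshift (2 * N)).symm
      _ = c := hcycN
      _ = f^[2 * k₀] a := hcdef
  have hP2 : ∃ m : ℕ, 1 ≤ m ∧ ∃ k : ℕ, (f ∘ f)^[m + k] a = (f ∘ f)^[k] a := ⟨N, hNmem⟩
  have hNmin : ∀ m : ℕ, 1 ≤ m → (∃ k : ℕ, (f ∘ f)^[m + k] a = (f ∘ f)^[k] a) → N ≤ m := by
    rintro m hm1 ⟨k, hk⟩
    rw [h2it, h2it] at hk
    have e : f^[2 * m + 2 * k] c = f^[0 + 2 * k] c := by
      rw [Nat.zero_add, hshift, hshift]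
      calc f^[2 * m + 2 * k + 2 * k₀] a = f^[2 * k₀] (f^[2 * (m + k)] a) := by
            rw [← Function.iterate_add_apply]; congr 1; ring
        _ = f^[2 * k₀] (f^[2 * k] a) := by rw [hk]
        _ = f^[2 * k + 2 * k₀] a := by rw [← Function.iterate_add_apply]; congr 1; ring
    have e2 := (hcyc _ _).mp e
    rw [ZMod.natCast_eq_natCast_iff] at e2
    have e3 : n ∣ 2 * m + 2 * k - (0 + 2 * k) :=
      (Nat.modEq_iff_dvd' (by omega)).mp e2.symm
    have e4 : n ∣ 2 * m := by
      have : 2 * m + 2 * k - (0 + 2 * k) = 2 * m := by omega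
      rwa [this] at e3
    exact Nat.le_of_dvd (by omega) (hNdvd m e4)
  have hnf2 : nf (f ∘ f) a = (N : ℕ∞) := by
    rw [nf, if_pos hP2]
    norm_cast
    apply le_antisymm
    · exact Nat.sInf_le hNmem
    · exact hNmin _ (Nat.sInf_mem hP2).1 (Nat.sInf_mem hP2).2
  refine ⟨N, hnf2, ?_⟩
  -- reflexivity of the complement relation
  have hrefl : ∀ x : A, fRel (f ∘ f) a x →
      x ∈ {y | fRel (f ∘ f) a y ∧ (x, y) ∉ betaSet f} := by
    intro x hx
    exact ⟨hx, (hBeta x x ((hX x).mp hx) ((hX x).mp hx)).mpr rfl⟩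
  -- equal invariants give equal classes
  have hclseq : ∀ x x' : A, fRel (f ∘ f) a x → fRel (f ∘ f) a x' →
      iotaF f c n x = iotaF f c n x' →
      {y | fRel (f ∘ f) a y ∧ (x, y) ∉ betaSet f} =
        {y | fRel (f ∘ f) a y ∧ (x', y) ∉ betaSet f} := by
    intro x x' hx hx' hii
    ext y
    simp only [Set.mem_setOf_eq]
    constructor
    · rintro ⟨hy, hny⟩
      refine ⟨hy, (hBeta x' y ((hX _).mp hx') ((hX _).mp hy)).mpr ?_⟩
      have := (hBeta x y ((hX _).mp hx) ((hX _).mp hy)).mp hny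
      rw [hii] at this
      exact this
    · rintro ⟨hy, hny⟩
      refine ⟨hy, (hBeta x y ((hX _).mp hx) ((hX _).mp hy)).mpr ?_⟩
      have := (hBeta x' y ((hX _).mp hx') ((hX _).mp hy)).mp hny
      rw [← hii] at this
      exact this
  -- the target set of invariant values
  have h2N0 : ((2 * N : ℕ) : ZMod n) = ((0 : ℕ) : ZMod n) := by
    rw [ZMod.natCast_eq_natCast_iff]
    exact (Nat.modEq_zero_iff_dvd).mpr hn2N
  push_cast at h2N0
  obtain ⟨gm, hgm⟩ : ∃ gm : Fin N → ZMod n, gm = fun j : Fin N => 2 * ((j : ℕ) : ZMod n) :=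
    ⟨_, rfl⟩
  have hginj : Function.Injective gm := by
    have key : ∀ i j : Fin N, (i : ℕ) ≤ (j : ℕ) → gm i = gm j → i = j := by
      intro i j hle hij
      rw [hgm] at hij
      simp only at hij
      have e1 : ((2 * (i : ℕ) : ℕ) : ZMod n) = ((2 * (j : ℕ) : ℕ) : ZMod n) := by
        push_cast
        linear_combination hij
      rw [ZMod.natCast_eq_natCast_iff] at e1
      have e2 : n ∣ 2 * (j : ℕ) - 2 * (i : ℕ) := (Nat.modEq_iff_dvd' (by omega)).mp e1
      have e3 : n ∣ 2 * ((j : ℕ) - (i : ℕ)) := by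
        have e : 2 * ((j : ℕ) - (i : ℕ)) = 2 * (j : ℕ) - 2 * (i : ℕ) := by omega
        rwa [e]
      have e4 := hNdvd _ e3
      have e5 : (j : ℕ) - (i : ℕ) = 0 :=
        Nat.eq_zero_of_dvd_of_lt e4 (by have := j.isLt; omega)
      exact Fin.ext (by omega)
    intro i j hij
    rcases le_total (i : ℕ) (j : ℕ) with hle | hle
    · exact key i j hle hij
    · exact (key j i hle hij.symm).symm
  -- the set of invariant values equals the range of gm
  have hVeq : {v : ZMod n | ∃ x : A, fRel (f ∘ f) a x ∧ iotaF f c n x = v} = Set.range gm := by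
    ext v
    simp only [Set.mem_setOf_eq, Set.mem_range]
    constructor
    · rintro ⟨x, hx, rfl⟩
      obtain ⟨t, s, hts⟩ := (hX x).mp hx
      obtain ⟨w, hw⟩ : ∃ w : ℕ, ((w : ℕ) : ZMod n) = (s : ZMod n) - (t : ZMod n) :=
        ⟨((s : ZMod n) - (t : ZMod n)).val, by simp⟩
      refine ⟨⟨w % N, Nat.mod_lt w (by omega)⟩, ?_⟩
      rw [hgm, iotaF_spec hcyc hts]
      simp only
      have ed : ((w : ℕ) : ZMod n) =
          ((w % N : ℕ) : ZMod n) + ((N : ℕ) : ZMod n) * ((w / N : ℕ) : ZMod n) := by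
        have e : (w : ℕ) = w % N + N * (w / N) := (Nat.mod_add_div w N).symm
        calc ((w : ℕ) : ZMod n) = ((w % N + N * (w / N) : ℕ) : ZMod n) := by rw [← e]
          _ = _ := by push_cast; ring
      linear_combination 2 * hw - 2 * ed - ((w / N : ℕ) : ZMod n) * h2N0
    · rintro ⟨j, rfl⟩
      refine ⟨f^[2 * (j : ℕ)] c, ?_, ?_⟩
      · exact (hX _).mpr ⟨0, (j : ℕ), rfl⟩
      · have hts : f^[2 * 0] (f^[2 * (j : ℕ)] c) = f^[2 * (j : ℕ)] c := rfl
        rw [iotaF_spec hcyc hts, hgm]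
        push_cast
        ring
  -- the bijection between classes and invariant values
  obtain ⟨Φ, hΦ⟩ : ∃ Φ : {C : Set A // ∃ x, fRel (f ∘ f) a x ∧
        C = {y | fRel (f ∘ f) a y ∧ (x, y) ∉ betaSet f}} →
        ↥{v : ZMod n | ∃ x : A, fRel (f ∘ f) a x ∧ iotaF f c n x = v},
      ∀ C, (Φ C : ZMod n) = iotaF f c n C.2.choose :=
    ⟨fun C => ⟨iotaF f c n C.2.choose, C.2.choose, C.2.choose_spec.1, rfl⟩, fun C => rfl⟩
  have hΦbij : Function.Bijective Φ := by
    constructor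
    · rintro C C' h
      have h' : iotaF f c n C.2.choose = iotaF f c n C'.2.choose := by
        rw [← hΦ C, ← hΦ C', h]
      apply Subtype.ext
      rw [C.2.choose_spec.2, C'.2.choose_spec.2]
      exact hclseq _ _ C.2.choose_spec.1 C'.2.choose_spec.1 h'
    · rintro ⟨v, x, hx, hvx⟩
      refine ⟨⟨{y | fRel (f ∘ f) a y ∧ (x, y) ∉ betaSet f}, x, hx, rfl⟩, ?_⟩
      apply Subtype.ext
      rw [hΦ]
      obtain ⟨hC1, hC2⟩ := (⟨x, hx, rfl⟩ : ∃ x', fRel (f ∘ f) a x' ∧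
        {y | fRel (f ∘ f) a y ∧ (x, y) ∉ betaSet f} =
          {y | fRel (f ∘ f) a y ∧ (x', y) ∉ betaSet f}).choose_spec
      have hxmem : x ∈ {y | fRel (f ∘ f) a y ∧ (x, y) ∉ betaSet f} := hrefl x hx
      rw [hC2] at hxmem
      obtain ⟨-, hnb⟩ := hxmem
      have := (hBeta _ _ ((hX _).mp hC1) ((hX _).mp hx)).mp hnb
      rw [this]
      exact hvx
  rw [Nat.card_eq_of_bijective Φ hΦbij, hVeq, Nat.card_range_of_injective hginj]
  simp
end

section
/- Let f : A → A. If n_f(x) is an odd (finite) integer, then [x]_f = [x]_{f²} = [f(x)]_{f²} and n_{f²}(x) = n_f(x). If n_f(x) is even or n_f(x) = ∞, then x ≁_{f²} f(x), [x]_f = [x]_{f²} ∪ [f(x)]_{f²}, and n_{f²}(x) = n_f(x)/2 (with n_{f²}(x) = ∞ when n_f(x) = ∞). -/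
section AuxLemmas

variable {A : Type*}

private lemma fRel_symm' {f : A → A} {x y : A} (h : fRel f x y) : fRel f y x := by
  obtain ⟨k, l, h⟩ := h; exact ⟨l, k, h.symm⟩

private lemma fRel_trans' {f : A → A} {x y z : A} (h1 : fRel f x y) (h2 : fRel f y z) :
    fRel f x z := by
  obtain ⟨k, l, h1⟩ := h1
  obtain ⟨k', l', h2⟩ := h2
  refine ⟨k' + k, l + l', ?_⟩
  have e1 := congrArg (f^[k']) h1
  have e2 := congrArg (f^[l]) h2
  rw [← Function.iterate_add_apply, ← Function.iterate_add_apply] at e1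
  rw [← Function.iterate_add_apply, ← Function.iterate_add_apply] at e2
  rw [Nat.add_comm k' l] at e1
  exact e1.trans e2

private lemma pad' {f : A → A} {x : A} {m k : ℕ} (h : f^[m + k] x = f^[k] x) (j : ℕ) :
    f^[m + (k + j)] x = f^[k + j] x := by
  have h2 := congrArg (f^[j]) h
  rw [← Function.iterate_add_apply, ← Function.iterate_add_apply] at h2
  rw [(by omega : m + (k + j) = j + (m + k)), (by omega : k + j = j + k)]
  exact h2

private lemma padmul' {f : A → A} {x : A} {m k : ℕ} (h : f^[m + k] x = f^[k] x)
    (t j : ℕ) : f^[t * m + (k + j)] x = f^[k + j] x := by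
  induction t with
  | zero => simp
  | succ t ih =>
    rw [(by ring : (t + 1) * m + (k + j) = t * m + (m + (k + j))),
      Function.iterate_add_apply, pad' h j, ← Function.iterate_add_apply]
    exact ih

private lemma sInf_dvd_of_mem' {f : A → A} {x : A} {m : ℕ}
    (hm : m ∈ {m : ℕ | 1 ≤ m ∧ ∃ k, f^[m + k] x = f^[k] x}) :
    sInf {m : ℕ | 1 ≤ m ∧ ∃ k, f^[m + k] x = f^[k] x} ∣ m := by
  set S := {m : ℕ | 1 ≤ m ∧ ∃ k, f^[m + k] x = f^[k] x} with hS
  have hne : S.Nonempty := ⟨m, hm⟩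
  have hnS := Nat.sInf_mem hne
  obtain ⟨hn1, k, hk⟩ := hnS
  obtain ⟨hm1, k', hk'⟩ := hm
  set n := sInf S with hn
  set d := f^[k + k'] x with hd
  have hpn : Function.IsPeriodicPt f n d := by
    show f^[n] d = d
    rw [hd, ← Function.iterate_add_apply, (by omega : n + (k + k') = n + (k + k'))]
    exact pad' hk k'
  have hpm : Function.IsPeriodicPt f m d := by
    show f^[m] d = d
    rw [hd, ← Function.iterate_add_apply]
    rw [(by omega : m + (k + k') = m + (k' + k)), (by omega : k + k' = k' + k)]
    exact pad' hk' k
  set p := Function.minimalPeriod f d with hp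
  have hppos : 0 < p := Function.IsPeriodicPt.minimalPeriod_pos (by omega) hpn
  have hpmem : p ∈ S := by
    refine ⟨hppos, k + k', ?_⟩
    rw [Function.iterate_add_apply]
    exact Function.isPeriodicPt_minimalPeriod f d
  have hle : n ≤ p := Nat.sInf_le hpmem
  have hdvdn : p ∣ n := hpn.minimalPeriod_dvd
  have hpe : p = n := le_antisymm (Nat.le_of_dvd (by omega) hdvdn) hle
  have := hpm.minimalPeriod_dvd
  rwa [← hp, hpe] at this

private lemma iter_comp' (f : A → A) (j : ℕ) : (f ∘ f)^[j] = f^[2 * j] := by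
  rw [Function.iterate_mul]
  rfl

private lemma comp_eq' {g : A → A} {a b : A} (h : fRel g a b) :
    {y | fRel g a y} = {y | fRel g b y} := by
  ext y
  simp only [Set.mem_setOf_eq]
  exact ⟨fun h' => fRel_trans' (fRel_symm' h) h', fun h' => fRel_trans' h h'⟩

private lemma union_eq' (f : A → A) (x : A) :
    {y | fRel f x y} = {y | fRel (f ∘ f) x y} ∪ {y | fRel (f ∘ f) (f x) y} := by
  have hit : ∀ (n : ℕ) (y : A), (f ∘ f)^[n] y = f^[2 * n] y := fun n y => by
    rw [iter_comp']
  ext y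
  simp only [Set.mem_union, Set.mem_setOf_eq]
  constructor
  · rintro ⟨k, l, h⟩
    have h1 : f^[k + 1] x = f^[l + 1] y := by
      rw [Function.iterate_succ_apply', Function.iterate_succ_apply', h]
    rcases Nat.even_or_odd k with ⟨a, ha⟩ | ⟨a, ha⟩ <;>
      rcases Nat.even_or_odd l with ⟨b, hb⟩ | ⟨b, hb⟩
    · exact Or.inl ⟨a, b, by
        rw [hit, hit, (by omega : 2 * a = k), (by omega : 2 * b = l)]; exact h⟩
    · refine Or.inr ⟨a, b + 1, ?_⟩
      rw [hit, hit, ← Function.iterate_succ_apply, Nat.succ_eq_add_one,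
        (by omega : 2 * a + 1 = k + 1), (by omega : 2 * (b + 1) = l + 1)]
      exact h1
    · refine Or.inr ⟨a, b, ?_⟩
      rw [hit, hit, ← Function.iterate_succ_apply, Nat.succ_eq_add_one,
        (by omega : 2 * a + 1 = k), (by omega : 2 * b = l)]
      exact h
    · refine Or.inl ⟨a + 1, b + 1, ?_⟩
      rw [hit, hit, (by omega : 2 * (a + 1) = k + 1), (by omega : 2 * (b + 1) = l + 1)]
      exact h1
  · rintro (⟨k, l, h⟩ | ⟨k, l, h⟩)
    · exact ⟨2 * k, 2 * l, by rw [← hit, ← hit]; exact h⟩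
    · refine ⟨2 * k + 1, 2 * l, ?_⟩
      rw [Function.iterate_succ_apply, ← hit, ← hit]
      exact h

end AuxLemmas

/-- If `n_f(x)` is odd, then `[x]_f = [x]_{f²} = [f(x)]_{f²}`
and `n_{f²}(x) = n_f(x)`. If `n_f(x)` is even or `n_f(x) = ∞`, then
`x ≁_{f²} f(x)`, `[x]_f = [x]_{f²} ∪ [f(x)]_{f²}`, and `n_{f²}(x) = n_f(x)/2`
(with `n_{f²}(x) = ∞` when `n_f(x) = ∞`). -/
theorem component_and_period_of_sq {A : Type*} (f : A → A) (x : A) :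
    (∀ m : ℕ, Odd m → nf f x = (m : ℕ∞) →
      ({y | fRel f x y} = {y | fRel (f ∘ f) x y} ∧
        {y | fRel (f ∘ f) x y} = {y | fRel (f ∘ f) (f x) y} ∧
        nf (f ∘ f) x = (m : ℕ∞))) ∧
    (∀ m : ℕ, Even m → nf f x = (m : ℕ∞) →
      (¬ fRel (f ∘ f) x (f x) ∧
        {y | fRel f x y} = {y | fRel (f ∘ f) x y} ∪ {y | fRel (f ∘ f) (f x) y} ∧
        nf (f ∘ f) x = ((m / 2 : ℕ) : ℕ∞))) ∧
    (nf f x = ⊤ →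
      (¬ fRel (f ∘ f) x (f x) ∧
        {y | fRel f x y} = {y | fRel (f ∘ f) x y} ∪ {y | fRel (f ∘ f) (f x) y} ∧
        nf (f ∘ f) x = ⊤)) := by
  have hit : ∀ (n : ℕ) (y : A), (f ∘ f)^[n] y = f^[2 * n] y := fun n y => by
    rw [iter_comp']
  refine ⟨?_, ?_, ?_⟩
  · -- odd case
    intro m hodd hEq
    have hcond : ∃ m : ℕ, 1 ≤ m ∧ ∃ k : ℕ, f^[m + k] x = f^[k] x := by
      by_contra hc
      simp only [nf, if_neg hc] at hEq
      exact (ENat.top_ne_coe m) hEq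
    have hm : sInf {m : ℕ | 1 ≤ m ∧ ∃ k, f^[m + k] x = f^[k] x} = m := by
      simp only [nf, if_pos hcond] at hEq
      exact_mod_cast hEq
    have hmem : m ∈ {m : ℕ | 1 ≤ m ∧ ∃ k, f^[m + k] x = f^[k] x} :=
      hm ▸ Nat.sInf_mem hcond
    obtain ⟨hm1, k, hk⟩ := hmem
    obtain ⟨c, hc⟩ := hodd
    have hxfx : fRel (f ∘ f) x (f x) := by
      refine ⟨k + m, k + c, ?_⟩
      rw [hit, hit, ← Function.iterate_succ_apply, Nat.succ_eq_add_one,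
        (by omega : 2 * (k + m) = 1 * m + (k + (k + m))),
        (by omega : 2 * (k + c) + 1 = k + (k + m))]
      exact padmul' hk 1 (k + m)
    have e2 : {y | fRel (f ∘ f) x y} = {y | fRel (f ∘ f) (f x) y} := comp_eq' hxfx
    have e1 : {y | fRel f x y} = {y | fRel (f ∘ f) x y} := by
      rw [union_eq' f x, ← e2, Set.union_self]
    refine ⟨e1, e2, ?_⟩
    have hmemg : m ∈ {m : ℕ | 1 ≤ m ∧ ∃ k, (f ∘ f)^[m + k] x = (f ∘ f)^[k] x} := by
      refine ⟨hm1, k, ?_⟩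
      rw [hit, hit, (by omega : 2 * (m + k) = 2 * m + (k + k)),
        (by omega : 2 * k = k + k)]
      exact padmul' hk 2 k
    have hcondg : ∃ m : ℕ, 1 ≤ m ∧ ∃ k : ℕ, (f ∘ f)^[m + k] x = (f ∘ f)^[k] x :=
      ⟨m, hmemg⟩
    obtain ⟨hn21, k2, hk2⟩ := Nat.sInf_mem hcondg
    set n2 := sInf {m : ℕ | 1 ≤ m ∧ ∃ k, (f ∘ f)^[m + k] x = (f ∘ f)^[k] x} with hn2
    rw [hit, hit] at hk2
    have hn21' : 1 ≤ n2 := hn21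
    have hk2' : f^[2 * (n2 + k2)] x = f^[2 * k2] x := hk2
    have h2mem : 2 * n2 ∈ {m : ℕ | 1 ≤ m ∧ ∃ k, f^[m + k] x = f^[k] x} := by
      refine ⟨by omega, 2 * k2, ?_⟩
      rw [(by omega : 2 * n2 + 2 * k2 = 2 * (n2 + k2))]
      exact hk2'
    have hdvd : m ∣ 2 * n2 := hm ▸ sInf_dvd_of_mem' h2mem
    have hcop : Nat.Coprime m 2 := by
      rw [Nat.coprime_two_right]; exact ⟨c, hc⟩
    have hdvd2 : m ∣ n2 := hcop.dvd_of_dvd_mul_right (by rwa [mul_comm] at hdvd)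
    have hle : n2 ≤ m := Nat.sInf_le hmemg
    have heq : n2 = m := le_antisymm hle (Nat.le_of_dvd (by omega) hdvd2)
    simp only [nf, if_pos hcondg]
    exact_mod_cast congrArg (Nat.cast : ℕ → ℕ∞) heq
  · -- even case
    intro m heven hEq
    have hcond : ∃ m : ℕ, 1 ≤ m ∧ ∃ k : ℕ, f^[m + k] x = f^[k] x := by
      by_contra hc
      simp only [nf, if_neg hc] at hEq
      exact (ENat.top_ne_coe m) hEq
    have hm : sInf {m : ℕ | 1 ≤ m ∧ ∃ k, f^[m + k] x = f^[k] x} = m := by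
      simp only [nf, if_pos hcond] at hEq
      exact_mod_cast hEq
    have hmem : m ∈ {m : ℕ | 1 ≤ m ∧ ∃ k, f^[m + k] x = f^[k] x} :=
      hm ▸ Nat.sInf_mem hcond
    obtain ⟨hm1, k, hk⟩ := hmem
    obtain ⟨q, hq⟩ := heven
    have hnrel : ¬ fRel (f ∘ f) x (f x) := by
      rintro ⟨a, b, hab⟩
      rw [hit, hit, ← Function.iterate_succ_apply, Nat.succ_eq_add_one] at hab
      rcases Nat.lt_trichotomy (2 * a) (2 * b + 1) with hlt | heq' | hgt
      · have hdmem : (2 * b + 1 - 2 * a) ∈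
            {m : ℕ | 1 ≤ m ∧ ∃ k, f^[m + k] x = f^[k] x} := by
          refine ⟨by omega, 2 * a, ?_⟩
          rw [(by omega : 2 * b + 1 - 2 * a + 2 * a = 2 * b + 1)]
          exact hab.symm
        have hdd : m ∣ 2 * b + 1 - 2 * a := hm ▸ sInf_dvd_of_mem' hdmem
        have h2d : 2 ∣ 2 * b + 1 - 2 * a := dvd_trans ⟨q, by omega⟩ hdd
        omega
      · omega
      · have hdmem : (2 * a - (2 * b + 1)) ∈
            {m : ℕ | 1 ≤ m ∧ ∃ k, f^[m + k] x = f^[k] x} := by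
          refine ⟨by omega, 2 * b + 1, ?_⟩
          rw [(by omega : 2 * a - (2 * b + 1) + (2 * b + 1) = 2 * a)]
          exact hab
        have hdd : m ∣ 2 * a - (2 * b + 1) := hm ▸ sInf_dvd_of_mem' hdmem
        have h2d : 2 ∣ 2 * a - (2 * b + 1) := dvd_trans ⟨q, by omega⟩ hdd
        omega
    refine ⟨hnrel, union_eq' f x, ?_⟩
    have hqmem : q ∈ {m : ℕ | 1 ≤ m ∧ ∃ k, (f ∘ f)^[m + k] x = (f ∘ f)^[k] x} := by
      refine ⟨by omega, k, ?_⟩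
      rw [hit, hit, (by omega : 2 * (q + k) = m + (k + k)),
        (by omega : 2 * k = k + k)]
      exact pad' hk k
    have hcondg : ∃ m : ℕ, 1 ≤ m ∧ ∃ k : ℕ, (f ∘ f)^[m + k] x = (f ∘ f)^[k] x :=
      ⟨q, hqmem⟩
    obtain ⟨hn21, k2, hk2⟩ := Nat.sInf_mem hcondg
    set n2 := sInf {m : ℕ | 1 ≤ m ∧ ∃ k, (f ∘ f)^[m + k] x = (f ∘ f)^[k] x} with hn2
    rw [hit, hit] at hk2
    have hn21' : 1 ≤ n2 := hn21
    have hk2' : f^[2 * (n2 + k2)] x = f^[2 * k2] x := hk2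
    have h2mem : 2 * n2 ∈ {m : ℕ | 1 ≤ m ∧ ∃ k, f^[m + k] x = f^[k] x} := by
      refine ⟨by omega, 2 * k2, ?_⟩
      rw [(by omega : 2 * n2 + 2 * k2 = 2 * (n2 + k2))]
      exact hk2'
    have hdvd : m ∣ 2 * n2 := hm ▸ sInf_dvd_of_mem' h2mem
    obtain ⟨d, hd⟩ := hdvd
    have hd' : 2 * n2 = 2 * (q * d) := by rw [hd, hq]; ring
    have hqd : q ∣ n2 := ⟨d, by omega⟩
    have hle : n2 ≤ q := Nat.sInf_le hqmem
    have heq : n2 = q := le_antisymm hle (Nat.le_of_dvd (by omega) hqd)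
    have hq2 : m / 2 = q := by omega
    simp only [nf, if_pos hcondg]
    rw [hq2]
    exact_mod_cast congrArg (Nat.cast : ℕ → ℕ∞) heq
  · -- infinite case
    intro hEq
    have hSfe : ¬ ∃ m : ℕ, 1 ≤ m ∧ ∃ k : ℕ, f^[m + k] x = f^[k] x := by
      intro hc
      simp only [nf, if_pos hc] at hEq
      exact (ENat.coe_ne_top _) hEq
    have hnrel : ¬ fRel (f ∘ f) x (f x) := by
      rintro ⟨a, b, hab⟩
      rw [hit, hit, ← Function.iterate_succ_apply, Nat.succ_eq_add_one] at hab
      rcases Nat.lt_trichotomy (2 * a) (2 * b + 1) with hlt | heq' | hgt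
      · refine hSfe ⟨2 * b + 1 - 2 * a, by omega, 2 * a, ?_⟩
        rw [(by omega : 2 * b + 1 - 2 * a + 2 * a = 2 * b + 1)]
        exact hab.symm
      · omega
      · refine hSfe ⟨2 * a - (2 * b + 1), by omega, 2 * b + 1, ?_⟩
        rw [(by omega : 2 * a - (2 * b + 1) + (2 * b + 1) = 2 * a)]
        exact hab
    refine ⟨hnrel, union_eq' f x, ?_⟩
    have hSge : ¬ ∃ m : ℕ, 1 ≤ m ∧ ∃ k : ℕ, (f ∘ f)^[m + k] x = (f ∘ f)^[k] x := by
      rintro ⟨m', hm'1, k', hk'⟩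
      rw [hit, hit] at hk'
      refine hSfe ⟨2 * m', by omega, 2 * k', ?_⟩
      rw [(by omega : 2 * m' + 2 * k' = 2 * (m' + k'))]
      exact hk'
    simp only [nf, if_neg hSge]
end

section
/- Let f : A → A and x, y ∈ A. If the pair (f(x), f(y)) is f-incomparable, i.e. (f(x), f(y)) ∈ π = α ∪ β, then (x, y) is also f-incomparable, i.e. (x, y) ∈ π. -/
/-- The set `α` of pairs `(x,y)` with `x ≁_f y` and `n_f(x)`, `n_f(y)` odd integers. -/
def alphaSet {A : Type*} (f : A → A) : Set (A × A) :=
  {p | ¬ fRel f p.1 p.2 ∧ (∃ m : ℕ, Odd m ∧ nf f p.1 = (m : ℕ∞)) ∧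
    (∃ m : ℕ, Odd m ∧ nf f p.2 = (m : ℕ∞))}

/-- The set `π = α ∪ β` of `f`-incomparable pairs. -/
def piSet {A : Type*} (f : A → A) : Set (A × A) := alphaSet f ∪ betaSet f

lemma nf_apply_eq {A : Type*} (f : A → A) (x : A) : nf f (f x) = nf f x := by
  have hset : {m : ℕ | 1 ≤ m ∧ ∃ k : ℕ, f^[m + k] (f x) = f^[k] (f x)}
      = {m : ℕ | 1 ≤ m ∧ ∃ k : ℕ, f^[m + k] x = f^[k] x} := by
    ext m
    constructor
    · rintro ⟨h1, k, hk⟩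
      refine ⟨h1, k + 1, ?_⟩
      have hm : m + (k + 1) = (m + k) + 1 := by omega
      rw [hm, Function.iterate_succ_apply, Function.iterate_succ_apply]
      exact hk
    · rintro ⟨h1, k, hk⟩
      refine ⟨h1, k, ?_⟩
      rw [← Function.iterate_succ_apply, ← Function.iterate_succ_apply,
        Function.iterate_succ_apply', Function.iterate_succ_apply', hk]
  have hcond : (∃ m : ℕ, 1 ≤ m ∧ ∃ k : ℕ, f^[m + k] (f x) = f^[k] (f x)) ↔
      (∃ m : ℕ, 1 ≤ m ∧ ∃ k : ℕ, f^[m + k] x = f^[k] x) :=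
    exists_congr fun m => Set.ext_iff.mp hset m
  classical
  unfold nf
  rw [hset]
  exact if_congr hcond rfl rfl

/-- If `(f x, f y)` is `f`-incomparable, then so is `(x, y)`. -/
theorem mem_piSet_of_apply {A : Type*} (f : A → A) (x y : A)
    (h : (f x, f y) ∈ piSet f) : (x, y) ∈ piSet f := by
  rcases h with h | h
  · left
    obtain ⟨hnr, hx, hy⟩ := h
    refine ⟨?_, ?_, ?_⟩
    · rintro ⟨k, l, hkl⟩
      exact hnr ⟨k, l, by
        rw [← Function.iterate_succ_apply, ← Function.iterate_succ_apply,
          Function.iterate_succ_apply', Function.iterate_succ_apply', hkl]⟩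
    · simpa [nf_apply_eq] using hx
    · simpa [nf_apply_eq] using hy
  · right
    obtain ⟨k, l, m, h1, h2, h3⟩ := h
    refine ⟨k, l, m + 1, ?_, ?_, ?_⟩ <;>
      simp only [← Nat.add_succ, Function.iterate_succ_apply] <;> assumption
end

section
/- Let f : A → A. If f has at most one fixed point and f² = f ∘ f has no proper cycle, then α = β = ∅, hence π = ∅. -/
/-- A point whose minimal period under `g` is at least 2 yields a proper cycle of `g`. -/
lemma cycle_of_minPeriod {A : Type*} (g : A → A) (a : A)
    (_h2 : 2 ≤ Function.minimalPeriod g a) : HasCycle g (Function.minimalPeriod g a) := by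
  set d := Function.minimalPeriod g a with hd
  refine ⟨fun i => g^[(i : ℕ)] a, ?_, ?_⟩
  · intro i j hij
    exact Fin.ext (Function.iterate_injOn_Iio_minimalPeriod i.isLt j.isLt hij)
  · intro i
    show g (g^[(i:ℕ)] a) = g^[((i:ℕ)+1) % d] a
    rw [← Function.iterate_succ_apply' g]
    rcases lt_or_ge ((i:ℕ)+1) d with h | h
    · rw [Nat.mod_eq_of_lt h]
    · have e : (i:ℕ) + 1 = d := le_antisymm i.isLt h
      simp only [Nat.succ_eq_add_one, e, Nat.mod_self, Function.iterate_zero_apply, hd,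
        Function.iterate_minimalPeriod]

lemma comp_self_eq_iterate_two {A : Type*} (f : A → A) : f ∘ f = f^[2] := rfl

/-- An odd-periodic point of `f` is fixed, when `f²` has no proper cycle. -/
lemma fix_of_odd_periodic {A : Type*} (f : A → A)
    (hcyc : ∀ n : ℕ, 2 ≤ n → ¬ HasCycle (f ∘ f) n) {a : A} {m : ℕ}
    (hm : 0 < m) (hodd : Odd m) (hp : f^[m] a = a) : f a = a := by
  have hp' : Function.IsPeriodicPt f m a := hp
  set d := Function.minimalPeriod f a with hd
  have hdpos : 0 < d := hp'.minimalPeriod_pos hm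
  have hddvd : d ∣ m := hp'.minimalPeriod_dvd
  have hdodd : Odd d := by
    rcases Nat.even_or_odd d with he | ho
    · exfalso
      obtain ⟨c, hc⟩ := he
      obtain ⟨t, ht⟩ : 2 ∣ m := dvd_trans ⟨c, by omega⟩ hddvd
      rw [Nat.odd_iff] at hodd
      omega
    · exact ho
  by_contra hne
  have hd1 : d ≠ 1 := fun h1 =>
    hne (Function.minimalPeriod_eq_one_iff_isFixedPt.mp (hd ▸ h1))
  have hd2 : 2 ≤ d := by omega
  have hgcd : Nat.gcd d 2 = 1 := Nat.Coprime.gcd_eq_one (Odd.coprime_two_right hdodd)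
  have hmp2 : Function.minimalPeriod (f ∘ f) a = d := by
    rw [comp_self_eq_iterate_two, Function.minimalPeriod_iterate_eq_div_gcd two_ne_zero,
      ← hd, hgcd, Nat.div_one]
  exact hcyc d hd2 (hmp2 ▸ cycle_of_minPeriod (f ∘ f) a (hmp2 ▸ hd2))

/-- If `f` has at most one fixed point and `f²` has no proper
cycle, then `α = β = ∅` (hence `π = ∅`). -/
theorem alpha_beta_empty {A : Type*} (f : A → A)
    (hfix : ∀ u v : A, f u = u → f v = v → u = v)
    (hcyc : ∀ n : ℕ, 2 ≤ n → ¬ HasCycle (f ∘ f) n) :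
    alphaSet f = ∅ ∧ betaSet f = ∅ ∧ piSet f = ∅ := by
  have hbeta : betaSet f = ∅ := by
    ext ⟨x, y⟩
    simp only [betaSet, Set.mem_setOf_eq, Set.mem_empty_iff_false, iff_false, not_exists]
    rintro k l m ⟨h1, h2, h3⟩
    set g := f ∘ f with hg
    set a := f^[m] x with ha
    set b := f^[m] y with hb
    have hka : g^[k] a = b := by
      rw [hg, comp_self_eq_iterate_two, ← Function.iterate_mul, ha,
        ← Function.iterate_add_apply]; exact h1
    have hlb : g^[l] b = a := by
      rw [hg, comp_self_eq_iterate_two, ← Function.iterate_mul, hb,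
        ← Function.iterate_add_apply]; exact h3.symm
    have hper : Function.IsPeriodicPt g (l + k) a := by
      show g^[l + k] a = a
      rw [Function.iterate_add_apply, hka, hlb]
    have hlk : 0 < l + k := by
      rcases Nat.eq_zero_or_pos (l + k) with h0 | h
      · obtain ⟨hl0, hk0⟩ : l = 0 ∧ k = 0 := by omega
        exact absurd (by rw [← hka, hk0, Function.iterate_zero_apply]) h2.symm
      · exact h
    set d := Function.minimalPeriod g a with hd
    have hdpos : 0 < d := hper.minimalPeriod_pos hlk
    have hd2 : 2 ≤ d := by
      rcases Nat.lt_or_ge d 2 with h | h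
      · exfalso
        have h1' : d = 1 := by omega
        have hfixa : g a = a := Function.minimalPeriod_eq_one_iff_isFixedPt.mp (hd ▸ h1')
        have : g^[k] a = a := Function.IsFixedPt.iterate hfixa k
        exact h2 (by rw [← hka, this])
      · exact h
    exact hcyc d hd2 (hd ▸ cycle_of_minPeriod g a (hd ▸ hd2))
  have hkey : ∀ x : A, ∀ m : ℕ, Odd m → nf f x = (m : ℕ∞) →
      ∃ k : ℕ, f (f^[k] x) = f^[k] x := by
    intro x m hodd h
    unfold nf at h
    split_ifs at h with hc
    · have hm : sInf {m : ℕ | 1 ≤ m ∧ ∃ k : ℕ, f^[m + k] x = f^[k] x} = m :=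
        Nat.cast_inj.mp h
      have hmem := Nat.sInf_mem (s := {m : ℕ | 1 ≤ m ∧ ∃ k : ℕ, f^[m + k] x = f^[k] x}) hc
      rw [hm] at hmem
      obtain ⟨hm1, k, hk⟩ := hmem
      refine ⟨k, fix_of_odd_periodic f hcyc hm1 hodd ?_⟩
      rw [← Function.iterate_add_apply]; exact hk
    · exact absurd h.symm (by simp)
  have halpha : alphaSet f = ∅ := by
    ext ⟨x, y⟩
    simp only [alphaSet, Set.mem_setOf_eq, Set.mem_empty_iff_false, iff_false]
    rintro ⟨hrel, ⟨m1, hodd1, h1⟩, ⟨m2, hodd2, h2⟩⟩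
    obtain ⟨k1, hk1⟩ := hkey x m1 hodd1 h1
    obtain ⟨k2, hk2⟩ := hkey y m2 hodd2 h2
    exact hrel ⟨k1, k2, hfix _ _ hk1 hk2⟩
  exact ⟨halpha, hbeta, by rw [piSet, halpha, hbeta, Set.union_empty]⟩
end

section
/- If (A, f, ≤_r) is a partially anti-ordered unary algebra and (x, y) ∈ π is an f-incomparable pair, then x and y are incomparable with respect to r (neither x ≤_r y nor y ≤_r x). -/
section Aux
variable {A : Type*} {f : A → A} {r : A → A → Prop}

lemma iter_even_mono (hanti : ∀ x y : A, r x y → r (f y) (f x)) :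
    ∀ (n : ℕ) (x y : A), r x y → r (f^[2*n] x) (f^[2*n] y) := by
  intro n
  induction n with
  | zero => intro x y h; simpa using h
  | succ n ih =>
    intro x y h
    have h2 := hanti _ _ (hanti _ _ (ih x y h))
    have e : ∀ z : A, f^[2*(n+1)] z = f (f (f^[2*n] z)) := by
      intro z
      rw [show 2*(n+1) = 2*n + 1 + 1 by ring]
      simp [Function.iterate_succ_apply']
    rw [e, e]; exact h2

lemma iter_cycle (a : A) (p : ℕ) (h : f^[p] a = a) : ∀ n, f^[p*n] a = a := by
  intro n
  induction n with
  | zero => simp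
  | succ n ih =>
    rw [show p*(n+1) = p*n + p by ring, Function.iterate_add_apply, h, ih]

/-- Key lemma for the `β` case. -/
lemma key (hr : IsPartialOrder A r) (hanti : ∀ x y : A, r x y → r (f y) (f x))
    (a b : A) (k l : ℕ) (hab : f^[2*k] a = b) (hba : f^[2*l] b = a)
    (h : r a b) : a = b := by
  rcases Nat.eq_zero_or_pos l with hl | hl
  · subst hl; simpa using hba.symm
  · obtain ⟨l', rfl⟩ : ∃ l', l = l' + 1 := ⟨l - 1, by omega⟩
    set l := l' + 1
    have hcyc : f^[2*(k+l)] a = a := by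
      rw [show 2*(k+l) = 2*l + 2*k by ring, Function.iterate_add_apply, hab, hba]
    have step : r (f^[2*l] a) a := by
      have h2 := iter_even_mono hanti l a b h
      rwa [hba] at h2
    have chain : ∀ n, r (f^[2*l*n] a) a := by
      intro n
      induction n with
      | zero => simpa using hr.refl a
      | succ n ih =>
        have h2 := iter_even_mono hanti (l*n) _ _ step
        rw [← Function.iterate_add_apply] at h2
        have h3 : r (f^[2*l*(n+1)] a) (f^[2*l*n] a) := by
          rw [show 2*l*(n+1) = 2*(l*n) + 2*l by ring, show 2*l*n = 2*(l*n) by ring]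
          exact h2
        exact hr.trans _ _ _ h3 ih
    have hb' : f^[2*l*(k+l')] a = b := by
      rw [show 2*l*(k+l') = 2*k + 2*(k+l)*l' by ring, Function.iterate_add_apply,
        show 2*(k+l)*l' = 2*(k+l)*l' by rfl, iter_cycle a (2*(k+l)) hcyc l', hab]
    have h4 := chain (k+l')
    rw [hb'] at h4
    exact hr.antisymm _ _ h h4

lemma nf_spec (x : A) (m : ℕ) (h : nf f x = (m : ℕ∞)) :
    ∃ k, f^[m + k] x = f^[k] x := by
  unfold nf at h
  split at h
  · rename_i hc
    have hm : sInf {m : ℕ | 1 ≤ m ∧ ∃ k, f^[m+k] x = f^[k] x} = m := by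
      exact_mod_cast h
    have hmem := Nat.sInf_mem (s := {m : ℕ | 1 ≤ m ∧ ∃ k, f^[m+k] x = f^[k] x})
      ⟨hc.choose, hc.choose_spec⟩
    rw [hm] at hmem
    exact hmem.2
  · simp at h

lemma shift_cycle (x : A) (p k : ℕ) (h : f^[p + k] x = f^[k] x) :
    ∀ N, k ≤ N → f^[p + N] x = f^[N] x := by
  intro N hN
  have e1 : p + N = (N - k) + (p + k) := by omega
  have e2 : N = (N - k) + k := by omega
  rw [e1, Function.iterate_add_apply, h, ← Function.iterate_add_apply, ← e2]

lemma main_aux (hr : IsPartialOrder A r) (hanti : ∀ x y : A, r x y → r (f y) (f x))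
    (x y : A) (hxy : (x, y) ∈ piSet f) : ¬ r x y := by
  intro hrxy
  rcases hxy with halpha | hbeta
  · obtain ⟨hnr, ⟨p, hpodd, hpx⟩, ⟨q, hqodd, hqy⟩⟩ := halpha
    obtain ⟨kx, hkx⟩ := nf_spec x p hpx
    obtain ⟨ky, hky⟩ := nf_spec y q hqy
    set N := 2 * (kx + ky) with hN
    have hax : f^[p] (f^[N] x) = f^[N] x := by
      rw [← Function.iterate_add_apply]
      exact shift_cycle x p kx hkx N (by omega)
    have hay : f^[q] (f^[N] y) = f^[N] y := by
      rw [← Function.iterate_add_apply]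
      exact shift_cycle y q ky hky N (by omega)
    have hab : r (f^[N] x) (f^[N] y) := iter_even_mono hanti (kx+ky) x y hrxy
    obtain ⟨c, hc⟩ := hpodd.mul hqodd
    have hcx : f^[p*q] (f^[N] x) = f^[N] x := iter_cycle _ p hax q
    have hcy : f^[p*q] (f^[N] y) = f^[N] y := by
      rw [show p*q = q*p by ring]; exact iter_cycle _ q hay p
    have hba : r (f^[N] y) (f^[N] x) := by
      have h2 := hanti _ _ (iter_even_mono hanti c _ _ hab)
      have e : ∀ z : A, f (f^[2*c] z) = f^[p*q] z := by
        intro z; rw [hc, show 2*c+1 = Nat.succ (2*c) from rfl, Function.iterate_succ_apply']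
      rw [e, e, hcx, hcy] at h2
      exact h2
    exact hnr ⟨N, N, hr.antisymm _ _ hab hba⟩
  · obtain ⟨k, l, m, h1, hne, h2⟩ := hbeta
    have hab : f^[2*k] (f^[m] x) = f^[m] y := by
      rw [← Function.iterate_add_apply]; exact h1
    have hba : f^[2*l] (f^[m] y) = f^[m] x := by
      rw [← Function.iterate_add_apply]; exact h2.symm
    rcases Nat.even_or_odd m with ⟨c, hc⟩ | ⟨c, hc⟩
    · have hm : r (f^[m] x) (f^[m] y) := by
        rw [hc, show c + c = 2*c by ring]
        exact iter_even_mono hanti c x y hrxy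
      exact hne ((key hr hanti _ _ k l hab hba hm).symm)
    · have hm : r (f^[m] y) (f^[m] x) := by
        have h2 := hanti _ _ (iter_even_mono hanti c x y hrxy)
        rw [hc, show 2*c+1 = Nat.succ (2*c) from rfl, Function.iterate_succ_apply',
          Function.iterate_succ_apply']
        exact h2
      exact hne (key hr hanti _ _ l k hba hab hm)

lemma piSet_symm (x y : A) (h : (x, y) ∈ piSet f) : (y, x) ∈ piSet f := by
  rcases h with ⟨hnr, h1, h2⟩ | ⟨k, l, m, h1, hne, h2⟩
  · exact Or.inl ⟨fun ⟨a, b, hab⟩ => hnr ⟨b, a, hab.symm⟩, h2, h1⟩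
  · exact Or.inr ⟨l, k, m, h2.symm, hne.symm, h1.symm⟩

end Aux

/-- **Proposition 3.3.** In a partially anti-ordered unary
algebra `(A, f, ≤_r)`, every `f`-incomparable pair is `r`-incomparable. -/
theorem incomparable_of_mem_piSet {A : Type*} (f : A → A)
    (r : A → A → Prop) (hr : IsPartialOrder A r)
    (hanti : ∀ x y : A, r x y → r (f y) (f x))
    (x y : A) (hxy : (x, y) ∈ piSet f) :
    ¬ r x y ∧ ¬ r y x := by
  exact ⟨main_aux hr hanti x y hxy, main_aux hr hanti y x (piSet_symm x y hxy)⟩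
end

section
/- If (A, f, ≤_r) is a partially anti-ordered unary algebra, R ⊇ r is an AMP extension of r, and (x, y) ∈ π is an f-incomparable pair, then x and y are incomparable with respect to R (neither x ≤_R y nor y ≤_R x). -/
section Helpers

variable {A : Type*} (f : A → A) (R : A → A → Prop)

lemma my_iterate_rel (hRanti : ∀ x y : A, R x y → R (f y) (f x))
    {x y : A} (h : R x y) :
    ∀ s : ℕ, (Even s → R (f^[s] x) (f^[s] y)) ∧ (Odd s → R (f^[s] y) (f^[s] x)) := by
  intro s
  induction s with
  | zero => exact ⟨fun _ => h, fun ho => absurd ho (by simp)⟩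
  | succ n ih =>
    constructor
    · intro he
      have ho : Odd n := Nat.Even.sub_odd (by omega) he ⟨0, rfl⟩
      have := hRanti _ _ (ih.2 ho)
      simpa [Function.iterate_succ_apply'] using this
    · intro ho
      have he : Even n := by rcases ho with ⟨t, ht⟩; exact ⟨t, by omega⟩
      have := hRanti _ _ (ih.1 he)
      simpa [Function.iterate_succ_apply'] using this

lemma my_per_step {n k j : ℕ} {x : A} (h : f^[n + k] x = f^[k] x) (hj : k ≤ j) :
    f^[n + j] x = f^[j] x := by
  have e : n + j = (j - k) + (n + k) := by omega
  rw [e, Function.iterate_add_apply, h, ← Function.iterate_add_apply]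
  congr 1; omega

lemma my_per_ext {n k : ℕ} {x : A} (h : f^[n + k] x = f^[k] x) :
    ∀ t j, k ≤ j → f^[n * t + j] x = f^[j] x := by
  intro t
  induction t with
  | zero => simp
  | succ s ih =>
    intro j hj
    have e : n * (s + 1) + j = n * s + (n + j) := by ring
    rw [e, ih (n + j) (by omega), my_per_step f h hj]

lemma my_even_pres (hRanti : ∀ x y : A, R x y → R (f y) (f x))
    {a b : A} (h : R a b) (t : ℕ) : R (f^[2 * t] a) (f^[2 * t] b) :=
  (my_iterate_rel f R hRanti h (2 * t)).1 ⟨t, by ring⟩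

lemma my_beta_core (hR : IsPartialOrder A R)
    (hRanti : ∀ x y : A, R x y → R (f y) (f x))
    {a b : A} {k l : ℕ}
    (h1 : f^[2 * k] a = b) (h2 : f^[2 * l] b = a) (hab : R a b) : a = b := by
  rcases Nat.eq_zero_or_pos k with hk | hk
  · simpa [hk] using h1
  rcases Nat.eq_zero_or_pos l with hl | hl
  · simpa [hl] using h2.symm
  set p := 2 * k + 2 * l with hp
  have hper : f^[p] a = a := by
    rw [hp, add_comm, Function.iterate_add_apply, h1, h2]
  have hpert : ∀ t, f^[p * t] a = a := by
    intro t
    induction t with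
    | zero => simp
    | succ s ih =>
      have e : p * (s + 1) = p * s + p := by ring
      rw [e, Function.iterate_add_apply, hper, ih]
  have h3 : R (f^[2 * l] a) a := by
    have := my_even_pres f R hRanti hab l
    rwa [h2] at this
  have hchain : ∀ j : ℕ, R (f^[2 * l * (j + 1)] a) a := by
    intro j
    induction j with
    | zero => simpa using h3
    | succ s ih =>
      have h4 := my_even_pres f R hRanti ih l
      have e : 2 * l + 2 * l * (s + 1) = 2 * l * (s + 1 + 1) := by ring
      rw [← Function.iterate_add_apply, e] at h4
      exact hR.trans _ _ _ h4 h3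
  have hp2 : 2 ≤ p := by omega
  have hj : R (f^[2 * l * (p - 1)] a) a := by
    have := hchain (p - 2)
    have e : p - 2 + 1 = p - 1 := by omega
    rwa [e] at this
  have hb : f^[2 * l * (p - 1)] a = b := by
    have e : 2 * l * (p - 1) = 2 * k + p * (2 * l - 1) := by
      rw [hp]
      zify [show (1:ℕ) ≤ 2 * k + 2 * l by omega, show (1:ℕ) ≤ 2 * l by omega]
      ring
    rw [e, Function.iterate_add_apply, hpert, h1]
  rw [hb] at hj
  exact hR.antisymm _ _ hab hj

lemma my_nf_spec {m : ℕ} {x : A} (h : nf f x = (m : ℕ∞)) :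
    1 ≤ m ∧ ∃ k, f^[m + k] x = f^[k] x := by
  unfold nf at h
  split_ifs at h with hc
  · have he : sInf {m : ℕ | 1 ≤ m ∧ ∃ k : ℕ, f^[m + k] x = f^[k] x} = m :=
      Nat.cast_inj.mp h
    have hmem := Nat.sInf_mem (s := {m : ℕ | 1 ≤ m ∧ ∃ k : ℕ, f^[m + k] x = f^[k] x}) hc
    rwa [he] at hmem
  · exact absurd h (by simp)

lemma my_key (hR : IsPartialOrder A R)
    (hRanti : ∀ x y : A, R x y → R (f y) (f x)) :
    ∀ x y : A, (x, y) ∈ piSet f → ¬ R x y := by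
  intro x y hxy hRxy
  rcases hxy with hα | hβ
  · obtain ⟨hnrel, ⟨n, hn_odd, hnx⟩, ⟨n', hn'_odd, hny⟩⟩ := hα
    obtain ⟨hn1, kx, hkx⟩ := my_nf_spec f hnx
    obtain ⟨hn'1, ky, hky⟩ := my_nf_spec f hny
    set M := kx + ky with hM
    set N := n * n' with hN
    have hNodd : Odd N := hn_odd.mul hn'_odd
    have hx : f^[N + M] x = f^[M] x := my_per_ext f hkx n' M (by omega)
    have hy : f^[N + M] y = f^[M] y := by
      have := my_per_ext f hky n M (by omega)
      rwa [mul_comm n' n, ← hN] at this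
    have hit := my_iterate_rel f R hRanti hRxy
    have key : R (f^[M] x) (f^[M] y) ∧ R (f^[M] y) (f^[M] x) := by
      rcases Nat.even_or_odd M with hMe | hMo
      · refine ⟨(hit M).1 hMe, ?_⟩
        have h2 := (hit (N + M)).2 (hNodd.add_even hMe)
        rwa [hx, hy] at h2
      · refine ⟨?_, (hit M).2 hMo⟩
        have h2 := (hit (N + M)).1 (hNodd.add_odd hMo)
        rwa [hx, hy] at h2
    exact hnrel ⟨M, M, hR.antisymm _ _ key.1 key.2⟩
  · obtain ⟨k, l, m, h1, hne, h2⟩ := hβ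
    have e1 : f^[2 * k] (f^[m] x) = f^[m] y := by
      rw [← Function.iterate_add_apply]; exact h1
    have e2 : f^[2 * l] (f^[m] y) = f^[m] x := by
      rw [← Function.iterate_add_apply]; exact h2.symm
    rcases Nat.even_or_odd m with hMe | hMo
    · have hab : R (f^[m] x) (f^[m] y) := (my_iterate_rel f R hRanti hRxy m).1 hMe
      exact hne (my_beta_core f R hR hRanti e1 e2 hab).symm
    · have hba : R (f^[m] y) (f^[m] x) := (my_iterate_rel f R hRanti hRxy m).2 hMo
      exact hne (my_beta_core f R hR hRanti e2 e1 hba)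

lemma my_piSet_symm {x y : A} (h : (x, y) ∈ piSet f) : (y, x) ∈ piSet f := by
  rcases h with ⟨h1, h2, h3⟩ | ⟨k, l, m, h1, h2, h3⟩
  · exact Or.inl ⟨fun ⟨k, l, h⟩ => h1 ⟨l, k, h.symm⟩, h3, h2⟩
  · exact Or.inr ⟨l, k, m, h3.symm, h2.symm, h1.symm⟩

end Helpers

/-- **Corollary 3.4.** In a partially anti-ordered unary algebra
`(A, f, ≤_r)`, if `R` is an AMP extension of `r`, then every `f`-incomparable
pair is `R`-incomparable. -/
theorem incomparable_of_mem_piSet_ext {A : Type*} (f : A → A)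
    (r : A → A → Prop) (hr : IsPartialOrder A r)
    (hanti : ∀ x y : A, r x y → r (f y) (f x))
    (R : A → A → Prop) (hR : IsPartialOrder A R)
    (hext : ∀ x y : A, r x y → R x y)
    (hRanti : ∀ x y : A, R x y → R (f y) (f x))
    (x y : A) (hxy : (x, y) ∈ piSet f) :
    ¬ R x y ∧ ¬ R y x :=
  ⟨my_key f R hR hRanti x y hxy, my_key f R hR hRanti y x (my_piSet_symm f hxy)⟩
end

section
/- Let n = 2k+1 ≥ 3 be odd, let A = {p, q, x₁, x₂, …, xₙ} be a set of n+2 distinct elements, and let f : A → A be the function with f(p) = q, f(q) = p, f(xₙ) = x₁, and f(xᵢ) = xᵢ₊₁ for 1 ≤ i ≤ n−1. Then there is no distributive lattice structure (A, ⊔, ⊓) on A such that f is a lattice anti-endomorphism of (A, ⊔, ⊓), even though f has a cycle of length 2. -/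
/-- **Example.** Let `n = 2k+1 ≥ 3` be odd and let
`A = {p, q, x₁, …, xₙ}` consist of `n + 2` distinct elements, with
`f(p) = q`, `f(q) = p`, `f(xᵢ) = xᵢ₊₁` (indices mod `n`). Then `f` has a cycle
of length 2, yet there is no distributive lattice structure on `A` making `f`
a lattice anti-endomorphism. -/
theorem no_distribLattice_antiEndo {A : Type*} (n k : ℕ)
    (hnk : n = 2 * k + 1) (h3 : 3 ≤ n)
    (p q : A) (x : Fin n → A)
    (hinj : Function.Injective x) (hpq : p ≠ q)
    (hp : ∀ i : Fin n, p ≠ x i) (hq : ∀ i : Fin n, q ≠ x i)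
    (hall : ∀ a : A, a = p ∨ a = q ∨ ∃ i : Fin n, a = x i)
    (f : A → A) (hfp : f p = q) (hfq : f q = p)
    (hfx : ∀ i : Fin n, f (x i) = x ⟨((i : ℕ) + 1) % n, Nat.mod_lt _ i.pos⟩) :
    (p ≠ q ∧ f p = q ∧ f q = p) ∧
    ¬ ∃ inst : DistribLattice A,
        @IsLatAntiEndo A (@DistribLattice.toLattice A inst) f := by
  refine ⟨⟨hpq, hfp, hfq⟩, ?_⟩
  rintro ⟨inst, hae⟩
  -- f is antitone
  have hanti : ∀ a b : A, a ≤ b → f b ≤ f a := by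
    intro a b hab
    have h := (hae a b).1
    rw [sup_eq_right.mpr hab] at h
    rw [h]
    exact inf_le_left
  -- even iterates are monotone
  have hmono2k : ∀ m : ℕ, ∀ a b : A, a ≤ b → f^[2 * m] a ≤ f^[2 * m] b := by
    intro m
    induction m with
    | zero => intro a b h; simpa using h
    | succ m ih =>
      intro a b h
      have : (2 * (m + 1)) = (2 * m + 1) + 1 := by ring
      rw [this, Function.iterate_succ_apply, Function.iterate_succ_apply]
      exact ih _ _ (hanti _ _ (hanti _ _ h))
  -- odd iterates are antitone
  have hantiodd : ∀ a b : A, a ≤ b → f^[n] b ≤ f^[n] a := by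
    intro a b h
    rw [hnk, show 2 * k + 1 = 1 + 2 * k by ring,
      Function.iterate_add_apply, Function.iterate_add_apply]
    exact hanti _ _ (hmono2k k _ _ h)
  -- iteration formula on the cycle
  have hiter : ∀ (m : ℕ) (i : Fin n),
      f^[m] (x i) = x ⟨((i : ℕ) + m) % n, Nat.mod_lt _ i.pos⟩ := by
    intro m
    induction m with
    | zero => intro i; simp [Nat.mod_eq_of_lt i.isLt]
    | succ m ih =>
      intro i
      rw [Function.iterate_succ_apply, hfx i, ih]
      congr 1
      apply Fin.ext
      show (((i : ℕ) + 1) % n + m) % n = ((i : ℕ) + (m + 1)) % n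
      conv_rhs => rw [show (i : ℕ) + (m + 1) = ((i : ℕ) + 1) + m by ring]
      exact Nat.mod_add_mod ((i : ℕ) + 1) n m
  -- f^[n] fixes each x i
  have hfix : ∀ i : Fin n, f^[n] (x i) = x i := by
    intro i
    rw [hiter n i]
    congr 1
    apply Fin.ext
    show ((i : ℕ) + n) % n = (i : ℕ)
    rw [Nat.add_mod_right]
    exact Nat.mod_eq_of_lt i.isLt
  -- the x's form an antichain
  have hchain : ∀ i j : Fin n, x i ≤ x j → i = j := by
    intro i j hij
    have h1 : f^[n] (x j) ≤ f^[n] (x i) := hantiodd _ _ hij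
    rw [hfix, hfix] at h1
    exact hinj (le_antisymm hij h1)
  -- pairwise sups lie in {p, q}
  have hsup : ∀ i j : Fin n, i ≠ j → (x i ⊔ x j = p ∨ x i ⊔ x j = q) := by
    intro i j hij
    rcases hall (x i ⊔ x j) with h | h | ⟨m, h⟩
    · exact Or.inl h
    · exact Or.inr h
    · exfalso
      have h1 : i = m := hchain i m (h ▸ le_sup_left)
      have h2 : j = m := hchain j m (h ▸ le_sup_right)
      exact hij (h1.trans h2.symm)
  -- pairwise infs lie in {p, q}
  have hinf : ∀ i j : Fin n, i ≠ j → (x i ⊓ x j = p ∨ x i ⊓ x j = q) := by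
    intro i j hij
    rcases hall (x i ⊓ x j) with h | h | ⟨m, h⟩
    · exact Or.inl h
    · exact Or.inr h
    · exfalso
      have h1 : m = i := hchain m i (h ▸ inf_le_left)
      have h2 : m = j := hchain m j (h ▸ inf_le_right)
      exact hij (h1.symm.trans h2)
  -- the pure lattice contradiction for three elements
  have key : ∀ u v w : A,
      (u ⊔ v = p ∨ u ⊔ v = q) → (u ⊓ v = p ∨ u ⊓ v = q) →
      (v ⊔ w = p ∨ v ⊔ w = q) → (u ⊓ w = p ∨ u ⊓ w = q) →
      (u ≠ p ∧ u ≠ q) → (v ≠ p ∧ v ≠ q) → False := by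
    intro u v w hsm htm hvw huw hu hv
    have hst : u ⊔ v ≠ u ⊓ v := by
      intro h
      have hu' : u = u ⊔ v := le_antisymm le_sup_left (h ▸ inf_le_left)
      rcases hsm with h1 | h1
      · exact hu.1 (hu'.trans h1)
      · exact hu.2 (hu'.trans h1)
    have swap : ∀ z : A, (z = p ∨ z = q) → z = u ⊔ v ∨ z = u ⊓ v := by
      intro z hz
      rcases hsm with hs1 | hs1 <;> rcases htm with ht1 | ht1 <;>
        rcases hz with hz | hz <;>
        first
        | exact absurd (hs1.trans ht1.symm) hst
        | exact Or.inl (hz.trans hs1.symm)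
        | exact Or.inr (hz.trans ht1.symm)
    have hvw' : v ⊔ w = u ⊔ v := by
      rcases swap _ hvw with h | h
      · exact h
      · exfalso
        have hv' : v = v ⊔ w := le_antisymm le_sup_left (h ▸ inf_le_right)
        rcases hvw with h1 | h1
        · exact hv.1 (hv'.trans h1)
        · exact hv.2 (hv'.trans h1)
    have huw' : u ⊓ w = u ⊓ v := by
      rcases swap _ huw with h | h
      · exfalso
        have hu' : u = u ⊓ w := le_antisymm (h ▸ le_sup_left) inf_le_left
        rcases huw with h1 | h1
        · exact hu.1 (hu'.trans h1)
        · exact hu.2 (hu'.trans h1)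
      · exact h
    have hfin : u = u ⊓ v := by
      calc u = u ⊓ (u ⊔ v) := (inf_sup_self).symm
      _ = u ⊓ (v ⊔ w) := by rw [hvw']
      _ = (u ⊓ v) ⊔ (u ⊓ w) := inf_sup_left u v w
      _ = (u ⊓ v) ⊔ (u ⊓ v) := by rw [huw']
      _ = u ⊓ v := sup_idem _
    rcases htm with h1 | h1
    · exact hu.1 (hfin.trans h1)
    · exact hu.2 (hfin.trans h1)
  -- apply it to x 0, x 1, x 2
  have h01 : (⟨0, by omega⟩ : Fin n) ≠ ⟨1, by omega⟩ := by simp [Fin.ext_iff]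
  have h02 : (⟨0, by omega⟩ : Fin n) ≠ ⟨2, by omega⟩ := by simp [Fin.ext_iff]
  have h12 : (⟨1, by omega⟩ : Fin n) ≠ ⟨2, by omega⟩ := by simp [Fin.ext_iff]
  exact key (x ⟨0, by omega⟩) (x ⟨1, by omega⟩) (x ⟨2, by omega⟩)
    (hsup _ _ h01) (hinf _ _ h01) (hsup _ _ h12) (hinf _ _ h02)
    ⟨fun h => hp _ h.symm, fun h => hq _ h.symm⟩
    ⟨fun h => hp _ h.symm, fun h => hq _ h.symm⟩
end
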